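/- arXiv:0905.1304 — 7 statements merged into one kernel-verified Lean document; each statement's English description precedes it below -/
import Mathlib

section
/- For every l ≥ 1 and every polynomial g ∈ ℝ[Y_1,…,Y_l], the function λ ↦ g(q_1(λ),…,q_l(λ)), where q_r(λ) = Σ_{i=1}^{|λ|} (λ_i + |λ| − i)^r, belongs to the algebra A of regular functions on Y. (Equivalently: every function of the form H_ψ(λ) = ψ(λ_1+|λ|−1, λ_2+|λ|−2, …, λ_{|λ|}, 0, 0, …), with ψ a symmetric function, belongs to A.) -/
open scoped BigOperators Classical

/-- Number of saturated chains `μ = ν⁰ ⊂ ν¹ ⊂ ⋯ ⊂ νᵏ = ν` in the Young graph,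
each step adding one box; this is `dim(μ,ν)`. -/
noncomputable def dimSkew (μ ν : YoungDiagram) : ℕ :=
  Set.ncard {f : Fin (ν.card - μ.card + 1) → YoungDiagram |
    f 0 = μ ∧ f (Fin.last _) = ν ∧
    ∀ i : Fin (ν.card - μ.card),
      f i.castSucc ≤ f i.succ ∧ (f i.succ).card = (f i.castSucc).card + 1}

/-- `dim λ`, the number of standard Young tableaux of shape `λ`. -/
noncomputable def dimSYT (lam : YoungDiagram) : ℕ := dimSkew ⊥ lam

/-- The `n`-th Plancherel average `⟨F⟩ₙ = ∑_{|λ|=n} F(λ)·(dim λ)²/n!`. -/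
noncomputable def plancherelAvg (n : ℕ) (F : YoungDiagram → ℝ) : ℝ :=
  ∑ᶠ lam ∈ {lam : YoungDiagram | lam.card = n},
    F lam * ((dimSYT lam : ℝ) ^ 2 / (n.factorial : ℝ))

/-- Content power sums: `p̂_r(λ) = ∑_{□∈λ} c(□)^r` (so `p̂_0(λ) = |λ|`). -/
noncomputable def phat (r : ℕ) (lam : YoungDiagram) : ℝ :=
  ∑ c ∈ lam.cells, ((c.2 : ℝ) - (c.1 : ℝ)) ^ r

/-- `q_r(λ) = ∑_{i=1}^{|λ|} (λ_i + |λ| - i)^r`. -/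
noncomputable def qfun (r : ℕ) (lam : YoungDiagram) : ℝ :=
  ∑ i ∈ Finset.range lam.card,
    ((lam.rowLen i : ℝ) + (lam.card : ℝ) - ((i : ℝ) + 1)) ^ r

/-- `p*_m(λ) = ∑_{i=1}^{ℓ(λ)} [(λ_i - i)^m - (-i)^m]` (1-based rows). -/
noncomputable def pstar (m : ℕ) (lam : YoungDiagram) : ℝ :=
  ∑ i ∈ Finset.range (lam.colLen 0),
    (((lam.rowLen i : ℝ) - ((i : ℝ) + 1)) ^ m - (-((i : ℝ) + 1)) ^ m)

/-- The algebra `A` of regular functions on `Y`, generated by the `p*_m`, `m ≥ 1`. -/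
noncomputable def regularAlg : Subalgebra ℝ (YoungDiagram → ℝ) :=
  Algebra.adjoin ℝ {f | ∃ m : ℕ, 1 ≤ m ∧ f = pstar m}

/-- The filtration term `A^(d)`: the span of monomials `(p*_1)^{r_1}(p*_2)^{r_2}⋯`
with `1·r_1 + 2·r_2 + ⋯ ≤ d`. -/
noncomputable def Afil (d : ℕ) : Submodule ℝ (YoungDiagram → ℝ) :=
  Submodule.span ℝ {f | ∃ r : ℕ →₀ ℕ, r 0 = 0 ∧ (r.sum fun m k => m * k) ≤ d ∧
    f = r.prod fun m k => pstar m ^ k}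

/-! Since `λ_i + |λ| - i = (λ_i - i) + |λ|`, the binomial theorem makes `q_r` a polynomial in
`|λ| = p*_1(λ)` and the power sums `∑_{i=1}^{|λ|} (λ_i - i)^k`. Rows below the diagram are
empty, so such a power sum is `p*_k(λ) + ∑_{i=1}^{|λ|} (-i)^k`, and by Faulhaber's formula the
last sum is a polynomial in `|λ|`. -/

open Finset

namespace YoungDiagram

theorem card_eq_sum_rowLen (μ : YoungDiagram) :
    μ.card = ∑ i ∈ range (μ.colLen 0), μ.rowLen i := by
  rw [YoungDiagram.card, card_eq_sum_card_fiberwise (f := Prod.fst) (t := range (μ.colLen 0))]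
  · exact sum_congr rfl fun i _ => (μ.rowLen_eq_card).symm
  · intro c hc
    rw [mem_coe, mem_range, ← mem_iff_lt_colLen]
    exact μ.up_left_mem le_rfl (Nat.zero_le _) hc

theorem colLen_zero_le_card (μ : YoungDiagram) : μ.colLen 0 ≤ μ.card := by
  rw [colLen_eq_card]
  exact card_le_card fun c hc => (mem_col_iff.1 hc).1

theorem rowLen_eq_zero_of_colLen_le (μ : YoungDiagram) {i : ℕ} (h : μ.colLen 0 ≤ i) :
    μ.rowLen i = 0 := by
  by_contra h0
  have : (i, 0) ∈ μ := mem_iff_lt_rowLen.2 (Nat.pos_of_ne_zero h0)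
  exact absurd (mem_iff_lt_colLen.1 this) (not_lt.2 h)

end YoungDiagram

theorem exists_polynomial_eval_eq_sum_range_pow (K : Type*) [Field K] [CharZero K] (k : ℕ) :
    ∃ P : Polynomial K, ∀ n : ℕ, P.eval (n : K) = ∑ i ∈ range n, (i : K) ^ k := by
  refine ⟨(((k + 1 : ℚ)⁻¹ • (Polynomial.bernoulli (k + 1) -
      Polynomial.C (bernoulli (k + 1)))).map (algebraMap ℚ K)), fun n => ?_⟩
  have h := Polynomial.sum_range_pow_eq_bernoulli_sub n k
  rw [Polynomial.eval_natCast_map, Polynomial.eval_smul, Polynomial.eval_sub, Polynomial.eval_C,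
    ← h, smul_eq_mul, inv_mul_cancel_left₀ (by positivity)]
  push_cast
  rfl

theorem Subalgebra.polynomial_eval_comp_mem {R X : Type*} [CommRing R]
    {S : Subalgebra R (X → R)} {f : X → R} (hf : f ∈ S) (P : Polynomial R) :
    (fun x => P.eval (f x)) ∈ S := by
  have h : (fun x => P.eval (f x)) = Polynomial.aeval f P :=
    funext fun x => (Polynomial.aeval_fn_apply P f x).symm
  rw [h]
  exact Algebra.adjoin_le (Set.singleton_subset_iff.2 hf)
    (Polynomial.aeval_mem_adjoin_singleton R f)

theorem Subalgebra.mvPolynomial_eval_comp_mem {R X σ : Type*} [CommRing R]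
    {S : Subalgebra R (X → R)} {f : σ → X → R} (hf : ∀ i, f i ∈ S) (g : MvPolynomial σ R) :
    (fun x => MvPolynomial.eval (fun i => f i x) g) ∈ S := by
  have h : (fun x => MvPolynomial.eval (fun i => f i x) g) = MvPolynomial.aeval f g :=
    funext fun x => (MvPolynomial.comp_aeval_apply f (Pi.evalAlgHom R (fun _ => R) x) g).symm
  rw [h]
  exact Algebra.adjoin_le (Set.range_subset_iff.2 hf)
    (MvPolynomial.aeval_range (R := R) f ▸ AlgHom.mem_range_self _ g)

noncomputable def rowShiftPowSum (k : ℕ) (lam : YoungDiagram) : ℝ :=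
  ∑ i ∈ range lam.card, ((lam.rowLen i : ℝ) - (i + 1)) ^ k

theorem pstar_mem_regularAlg (m : ℕ) : pstar m ∈ regularAlg := by
  rcases Nat.eq_zero_or_pos m with rfl | hm
  · have h : pstar 0 = 0 := funext fun lam => by simp [pstar]
    exact h ▸ zero_mem _
  · exact Algebra.subset_adjoin ⟨m, hm, rfl⟩

theorem pstar_one_eq_card : pstar 1 = fun lam => (lam.card : ℝ) := by
  funext lam
  rw [pstar, lam.card_eq_sum_rowLen]
  push_cast
  exact sum_congr rfl fun i _ => by ring

theorem card_mem_regularAlg : (fun lam : YoungDiagram => (lam.card : ℝ)) ∈ regularAlg :=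
  pstar_one_eq_card ▸ pstar_mem_regularAlg 1

theorem pstar_apply_eq_sum_range_card (k : ℕ) (lam : YoungDiagram) :
    pstar k lam =
      ∑ i ∈ range lam.card, (((lam.rowLen i : ℝ) - (i + 1)) ^ k - (-(i + 1 : ℝ)) ^ k) := by
  refine sum_subset (range_subset_range.2 lam.colLen_zero_le_card) fun i _ hi => ?_
  rw [lam.rowLen_eq_zero_of_colLen_le (not_lt.1 (mem_range.not.1 hi))]
  simp

theorem exists_polynomial_eval_eq_sum_range_neg_succ_pow (k : ℕ) :
    ∃ Q : Polynomial ℝ, ∀ n : ℕ, Q.eval (n : ℝ) = ∑ i ∈ range n, (-(i + 1 : ℝ)) ^ k := by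
  obtain ⟨P, hP⟩ := exists_polynomial_eval_eq_sum_range_pow ℝ k
  refine ⟨Polynomial.C ((-1) ^ k) * (P.comp (Polynomial.X + 1) - Polynomial.C (0 ^ k)),
    fun n => ?_⟩
  have hP' := hP (n + 1)
  rw [sum_range_succ'] at hP'
  push_cast at hP'
  simp only [Polynomial.eval_mul, Polynomial.eval_C, Polynomial.eval_sub, Polynomial.eval_comp,
    Polynomial.eval_add, Polynomial.eval_X, Polynomial.eval_one, hP', add_sub_cancel_right,
    mul_sum, neg_pow (_ + 1 : ℝ)]

theorem rowShiftPowSum_mem_regularAlg (k : ℕ) : rowShiftPowSum k ∈ regularAlg := by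
  obtain ⟨Q, hQ⟩ := exists_polynomial_eval_eq_sum_range_neg_succ_pow k
  have h : rowShiftPowSum k = pstar k + fun lam => Q.eval (lam.card : ℝ) := by
    funext lam
    rw [Pi.add_apply, hQ, pstar_apply_eq_sum_range_card, rowShiftPowSum, sum_sub_distrib,
      sub_add_cancel]
  rw [h]
  exact add_mem (pstar_mem_regularAlg k)
    (Subalgebra.polynomial_eval_comp_mem card_mem_regularAlg Q)

theorem qfun_eq_sum_choose (r : ℕ) :
    qfun r = ∑ j ∈ range (r + 1), (r.choose j : ℝ) •
      ((fun lam : YoungDiagram => (lam.card : ℝ)) ^ (r - j) * rowShiftPowSum j) := by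
  funext lam
  have hshift : ∀ i : ℕ, (lam.rowLen i : ℝ) + lam.card - (i + 1)
      = ((lam.rowLen i : ℝ) - (i + 1)) + lam.card := fun i => by ring
  simp only [qfun, hshift, add_pow, rowShiftPowSum, Finset.sum_apply, Pi.smul_apply,
    Pi.mul_apply, Pi.pow_apply, smul_eq_mul, mul_sum]
  rw [sum_comm]
  exact sum_congr rfl fun j _ => sum_congr rfl fun i _ => by ring

theorem qfun_mem_regularAlg (r : ℕ) : qfun r ∈ regularAlg := by
  rw [qfun_eq_sum_choose]
  exact sum_mem fun j _ => Subalgebra.smul_mem _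
    (mul_mem (pow_mem card_mem_regularAlg _) (rowShiftPowSum_mem_regularAlg j)) _

theorem qfun_polynomial_mem_regularAlg_general
    (l : ℕ) (g : MvPolynomial (Fin l) ℝ) :
    (fun lam => MvPolynomial.eval (fun i : Fin l => qfun (i.val + 1) lam) g)
      ∈ regularAlg :=
  Subalgebra.mvPolynomial_eval_comp_mem (fun _ => qfun_mem_regularAlg _) g

/-- Every polynomial in the functions `q_r(λ) = ∑_{i=1}^{|λ|} (λ_i + |λ| - i)^r`
belongs to the algebra `A` of regular functions on `Y`. -/
theorem qfun_polynomial_mem_regularAlg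
    (l : ℕ) (hl : 1 ≤ l) (g : MvPolynomial (Fin l) ℝ) :
    (fun lam => MvPolynomial.eval (fun i : Fin l => qfun (i.val + 1) lam) g)
      ∈ regularAlg :=
  qfun_polynomial_mem_regularAlg_general l g
end

section
/- For every Young diagram μ with m = |μ| and every integer n ≥ 0: Σ_{λ∈Y_n} ((dim λ)²/n!) · n^{↓m} · dim(μ,λ)/dim λ = C(n,m) · dim μ, where n^{↓m} = n(n−1)⋯(n−m+1) is the falling factorial and C(n,m) is the binomial coefficient (equal to 0 when n < m). In other words, the n-th Plancherel average of the function F_μ(λ) = |λ|^{↓m}·dim(μ,λ)/dim λ equals C(n,m)·dim μ. -/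
open scoped BigOperators Classical

/-!
Removing the last box of `λ` gives `dim(μ, λ) = ∑_{ν ⋖ λ} dim(μ, ν)`. The Young lattice is
1-differential: a diagram has one more addable than removable box, and two distinct diagrams of
the same size have as many common upper covers as common lower covers. Expanding each `dim λ`
over the lower covers of `λ` and exchanging sums, this gives `∑_{λ ⋗ ν} dim λ = (|ν| + 1) dim ν`,
and then, by induction on `n - m`, `∑_{|λ| = n} dim(μ, λ) dim λ = n^{↓(n - m)} dim μ`. It remains
to note `n^{↓m} n^{↓(n - m)} = n! C(n, m)`.
-/

open Finset

theorem Nat.add_descFactorial_mul_descFactorial (m k : ℕ) :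
    (m + k).descFactorial m * (m + k).descFactorial k = (m + k).factorial * (m + k).choose m := by
  rw [Nat.descFactorial_eq_factorial_mul_choose, Nat.descFactorial_eq_factorial_mul_choose,
    Nat.choose_symm_add, ← Nat.add_choose_mul_factorial_mul_factorial m k]
  ring

namespace YoungDiagram

theorem card_lt_card {ν ρ : YoungDiagram} (h : ν < ρ) : ν.card < ρ.card :=
  Finset.card_lt_card (cells_ssubset_iff.2 h)

theorem eq_of_le_of_card_le {ν ρ : YoungDiagram} (h : ν ≤ ρ) (hc : ρ.card ≤ ν.card) : ν = ρ :=
  YoungDiagram.ext (Finset.eq_of_subset_of_card_le (cells_subset_iff.2 h) hc)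

theorem card_sup_add_card_inf (ν ρ : YoungDiagram) :
    (ν ⊔ ρ).card + (ν ⊓ ρ).card = ν.card + ρ.card := by
  simp only [YoungDiagram.card, cells_sup, cells_inf, Finset.card_union_add_card_inter]

theorem cells_subset_range_card (l : YoungDiagram) :
    l.cells ⊆ Finset.range l.card ×ˢ Finset.range l.card := by
  rintro ⟨i, j⟩ hc
  have hcol : l.colLen j ≤ l.card := by
    rw [colLen_eq_card]; exact Finset.card_le_card (Finset.filter_subset _ _)
  have hrow : l.rowLen i ≤ l.card := by
    rw [rowLen_eq_card]; exact Finset.card_le_card (Finset.filter_subset _ _)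
  rw [mem_cells] at hc
  have := mem_iff_lt_colLen.1 hc
  have := mem_iff_lt_rowLen.1 hc
  simp only [Finset.mem_product, Finset.mem_range]
  omega

theorem finite_setOf_card_eq (n : ℕ) : {l : YoungDiagram | l.card = n}.Finite := by
  refine ((Finset.range n ×ˢ Finset.range n).powerset.finite_toSet.preimage
    fun _ _ _ _ => YoungDiagram.ext).subset fun l hl => ?_
  have hl : l.card = n := hl
  rw [Set.mem_preimage, Finset.mem_coe, Finset.mem_powerset, ← hl]
  exact cells_subset_range_card l

theorem finite_setOf_le (l : YoungDiagram) : {σ : YoungDiagram | σ ≤ l}.Finite :=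
  (l.cells.powerset.finite_toSet.preimage fun _ _ _ _ => YoungDiagram.ext).subset
    fun _ hσ => Finset.mem_powerset.2 (cells_subset_iff.2 hσ)

noncomputable def ofCard (n : ℕ) : Finset YoungDiagram := (finite_setOf_card_eq n).toFinset

@[simp] theorem mem_ofCard {n : ℕ} {l : YoungDiagram} : l ∈ ofCard n ↔ l.card = n :=
  Set.Finite.mem_toFinset _

noncomputable def upperCovers (ν : YoungDiagram) : Finset YoungDiagram :=
  (ofCard (ν.card + 1)).filter (ν ≤ ·)

noncomputable def lowerCovers (l : YoungDiagram) : Finset YoungDiagram :=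
  (ofCard (l.card - 1)).filter (· < l)

theorem mem_upperCovers {ν l : YoungDiagram} :
    l ∈ upperCovers ν ↔ ν ≤ l ∧ l.card = ν.card + 1 := by
  simp [upperCovers, and_comm]

theorem mem_lowerCovers {σ l : YoungDiagram} :
    σ ∈ lowerCovers l ↔ σ ≤ l ∧ l.card = σ.card + 1 := by
  simp only [lowerCovers, Finset.mem_filter, mem_ofCard]
  constructor
  · rintro ⟨hc, hlt⟩
    have := card_lt_card hlt
    exact ⟨hlt.le, by omega⟩
  · rintro ⟨hle, hc⟩
    exact ⟨by omega, lt_of_le_of_ne hle (by rintro rfl; omega)⟩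

theorem mem_lowerCovers_iff_mem_upperCovers {σ l : YoungDiagram} :
    σ ∈ lowerCovers l ↔ l ∈ upperCovers σ := by
  rw [mem_lowerCovers, mem_upperCovers]

theorem exists_cells_eq_insert {σ l : YoungDiagram} (h : l ∈ upperCovers σ) :
    ∃ c ∉ σ.cells, l.cells = insert c σ.cells := by
  obtain ⟨hle, hc⟩ := mem_upperCovers.1 h
  obtain ⟨c, hc, he⟩ := Finset.exists_eq_insert_iff.2 ⟨cells_subset_iff.2 hle, hc.symm⟩
  exact ⟨c, hc, he.symm⟩

theorem mem_of_cells_eq_insert {σ l : YoungDiagram} {c d : ℕ × ℕ}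
    (h : l.cells = insert c σ.cells) (hd : d ∈ l) (hne : d ≠ c) : d ∈ σ := by
  rw [← mem_cells, h] at hd
  exact (mem_cells _).1 (Finset.mem_of_mem_insert_of_ne hd hne)

theorem rowLen_pos_iff {ν : YoungDiagram} {i : ℕ} : 0 < ν.rowLen i ↔ i < ν.colLen 0 := by
  rw [← mem_iff_lt_rowLen, mem_iff_lt_colLen]

noncomputable def addableRows (ν : YoungDiagram) : Finset ℕ :=
  (Finset.range (ν.colLen 0 + 1)).filter fun i => i = 0 ∨ ν.rowLen i < ν.rowLen (i - 1)

noncomputable def removableRows (ν : YoungDiagram) : Finset ℕ :=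
  (Finset.range (ν.colLen 0)).filter fun i => ν.rowLen (i + 1) < ν.rowLen i

theorem mem_addableRows {ν : YoungDiagram} {i : ℕ} :
    i ∈ addableRows ν ↔ i = 0 ∨ ν.rowLen i < ν.rowLen (i - 1) := by
  simp only [addableRows, Finset.mem_filter, Finset.mem_range, and_iff_right_iff_imp]
  rintro (rfl | h)
  · omega
  · have := rowLen_pos_iff.1 (Nat.zero_lt_of_lt h)
    omega

theorem mem_removableRows {ν : YoungDiagram} {i : ℕ} :
    i ∈ removableRows ν ↔ ν.rowLen (i + 1) < ν.rowLen i := by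
  simp only [removableRows, Finset.mem_filter, Finset.mem_range, and_iff_right_iff_imp]
  exact fun h => rowLen_pos_iff.1 (Nat.zero_lt_of_lt h)

theorem card_addableRows (ν : YoungDiagram) :
    #(addableRows ν) = #(removableRows ν) + 1 := by
  have h : addableRows ν = insert 0 ((removableRows ν).map (addRightEmbedding 1)) := by
    ext (_ | i) <;> simp [mem_addableRows, mem_removableRows]
  rw [h, Finset.card_insert_of_notMem (by simp), Finset.card_map]

def addBox (ν : YoungDiagram) {i : ℕ} (hi : i ∈ addableRows ν) : YoungDiagram where
  cells := insert (i, ν.rowLen i) ν.cells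
  isLowerSet := by
    rw [Finset.coe_insert]
    rintro ⟨a, b⟩ ⟨x, y⟩ hxy (hab | hmem)
    · rw [hab] at hxy
      obtain ⟨hx, hy⟩ : x ≤ i ∧ y ≤ ν.rowLen i := hxy
      rcases eq_or_ne (x, y) (i, ν.rowLen i) with h | h
      · exact Or.inl h
      refine Or.inr (mem_iff_lt_rowLen.2 ?_)
      rcases hx.lt_or_eq with hx | rfl
      · have := ν.rowLen_anti x (i - 1) (by omega)
        have := (mem_addableRows.1 hi).resolve_left (by omega)
        omega
      · exact hy.lt_of_ne fun hy => h (by rw [hy])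
    · exact Or.inr (ν.isLowerSet hxy hmem)

def removeBox (ν : YoungDiagram) {i : ℕ} (hi : i ∈ removableRows ν) : YoungDiagram where
  cells := ν.cells.erase (i, ν.rowLen i - 1)
  isLowerSet := by
    rw [Finset.coe_erase]
    rintro ⟨a, b⟩ ⟨x, y⟩ hxy ⟨hab, hne⟩
    refine ⟨ν.isLowerSet hxy hab, ?_⟩
    intro hxy'
    rw [hxy'] at hxy
    obtain ⟨hi', hb'⟩ : i ≤ a ∧ ν.rowLen i - 1 ≤ b := hxy
    have hb : b < ν.rowLen a := mem_iff_lt_rowLen.1 hab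
    have hi := mem_removableRows.1 hi
    rcases hi'.lt_or_eq with hia | rfl
    · have := ν.rowLen_anti (i + 1) a hia
      omega
    · exact hne (by rw [show b = ν.rowLen i - 1 by omega]; rfl)

theorem addBox_mem_upperCovers (ν : YoungDiagram) {i : ℕ} (hi : i ∈ addableRows ν) :
    addBox ν hi ∈ upperCovers ν := by
  refine mem_upperCovers.2 ⟨cells_subset_iff.1 (Finset.subset_insert _ _), ?_⟩
  refine Finset.card_insert_of_notMem ?_
  rw [mem_cells, mem_iff_lt_rowLen]
  exact lt_irrefl _

theorem removeBox_mem_lowerCovers (ν : YoungDiagram) {i : ℕ} (hi : i ∈ removableRows ν) :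
    removeBox ν hi ∈ lowerCovers ν := by
  refine mem_lowerCovers.2 ⟨cells_subset_iff.1 (Finset.erase_subset _ _), ?_⟩
  refine (Finset.card_erase_add_one ?_).symm
  rw [mem_cells, mem_iff_lt_rowLen]
  have := mem_removableRows.1 hi
  omega

theorem exists_addBox_eq {ν l : YoungDiagram} (hl : l ∈ upperCovers ν) :
    ∃ i, ∃ hi : i ∈ addableRows ν, addBox ν hi = l := by
  obtain ⟨⟨i, j⟩, hc, hcells⟩ := exists_cells_eq_insert hl
  have hij : (i, j) ∈ l := by rw [← mem_cells, hcells]; exact Finset.mem_insert_self _ _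
  have hj : j = ν.rowLen i := by
    have h1 : ν.rowLen i ≤ j := not_lt.1 fun h => hc ((mem_cells _).2 (mem_iff_lt_rowLen.2 h))
    have h2 : j - 1 < ν.rowLen i ∨ j = 0 := by
      rcases Nat.eq_zero_or_pos j with h | h
      · exact Or.inr h
      · refine Or.inl (mem_iff_lt_rowLen.1 (mem_of_cells_eq_insert hcells ?_ ?_))
        · exact l.up_left_mem le_rfl (Nat.sub_le j 1) hij
        · simp only [ne_eq, Prod.mk.injEq, true_and]; omega
    omega
  have hi : i ∈ addableRows ν := by
    rw [mem_addableRows, ← hj]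
    refine (Nat.eq_zero_or_pos i).imp id fun h => mem_iff_lt_rowLen.1 ?_
    refine mem_of_cells_eq_insert hcells (l.up_left_mem (Nat.sub_le i 1) le_rfl hij) ?_
    simp only [ne_eq, Prod.mk.injEq, and_true]; omega
  exact ⟨i, hi, YoungDiagram.ext (by rw [hcells, hj]; rfl)⟩

theorem exists_removeBox_eq {ν σ : YoungDiagram} (hσ : σ ∈ lowerCovers ν) :
    ∃ i, ∃ hi : i ∈ removableRows ν, removeBox ν hi = σ := by
  obtain ⟨⟨i, j⟩, hc, hcells⟩ :=
    exists_cells_eq_insert (mem_lowerCovers_iff_mem_upperCovers.1 hσ)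
  have hnotMem : ∀ d, (i, j) ≤ d → d ≠ (i, j) → d ∉ ν := fun d hd hne hdν =>
    hc ((mem_cells _).2 (σ.isLowerSet hd (mem_of_cells_eq_insert hcells hdν hne)))
  have hj : j < ν.rowLen i :=
    mem_iff_lt_rowLen.1 (by rw [← mem_cells, hcells]; exact Finset.mem_insert_self _ _)
  have hright : ν.rowLen i ≤ j + 1 := not_lt.1 fun h =>
    hnotMem (i, j + 1) ⟨le_rfl, by simp⟩ (by simp) (mem_iff_lt_rowLen.2 h)
  have hbelow : ν.rowLen (i + 1) ≤ j := not_lt.1 fun h =>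
    hnotMem (i + 1, j) ⟨by simp, le_rfl⟩ (by simp) (mem_iff_lt_rowLen.2 h)
  have hi : i ∈ removableRows ν := mem_removableRows.2 (by omega)
  refine ⟨i, hi, YoungDiagram.ext ?_⟩
  change ν.cells.erase (i, ν.rowLen i - 1) = σ.cells
  rw [hcells, show ν.rowLen i - 1 = j by omega]
  exact Finset.erase_insert hc

theorem card_upperCovers (ν : YoungDiagram) : #(upperCovers ν) = #(removableRows ν) + 1 := by
  rw [← card_addableRows]
  refine (Finset.card_bij (fun i hi => addBox ν hi) (fun i hi => addBox_mem_upperCovers ν hi)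
    (fun a ha b hb hab => ?_) fun l hl => exists_addBox_eq hl).symm
  have hcells : insert (a, ν.rowLen a) ν.cells = insert (b, ν.rowLen b) ν.cells :=
    congrArg cells hab
  have hmem : (a, ν.rowLen a) ∈ insert (b, ν.rowLen b) ν.cells :=
    hcells ▸ Finset.mem_insert_self _ _
  refine (Finset.mem_insert.1 hmem).elim (congrArg Prod.fst) fun h => ?_
  exact absurd (mem_iff_lt_rowLen.1 ((mem_cells _).1 h)) (lt_irrefl _)

theorem card_lowerCovers (ν : YoungDiagram) : #(lowerCovers ν) = #(removableRows ν) := by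
  refine (Finset.card_bij (fun i hi => removeBox ν hi) (fun i hi => removeBox_mem_lowerCovers ν hi)
    (fun a ha b hb hab => ?_) fun σ hσ => exists_removeBox_eq hσ).symm
  by_contra hne
  have hmem : (a, ν.rowLen a - 1) ∈ ν.cells.erase (b, ν.rowLen b - 1) := by
    refine Finset.mem_erase.2 ⟨fun h => hne (congrArg Prod.fst h), ?_⟩
    rw [mem_cells, mem_iff_lt_rowLen]
    have := mem_removableRows.1 ha
    omega
  have hcells : ν.cells.erase (a, ν.rowLen a - 1) = ν.cells.erase (b, ν.rowLen b - 1) :=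
    congrArg cells hab
  rw [← hcells] at hmem
  exact (Finset.mem_erase.1 hmem).1 rfl

theorem card_upperCovers_eq_card_lowerCovers_add_one (ν : YoungDiagram) :
    #(upperCovers ν) = #(lowerCovers ν) + 1 := by
  rw [card_upperCovers, card_lowerCovers]

theorem lt_sup_of_ne {ν ρ : YoungDiagram} (hne : ν ≠ ρ) (hc : ν.card = ρ.card) : ν < ν ⊔ ρ :=
  lt_of_le_of_ne le_sup_left fun h =>
    hne (eq_of_le_of_card_le (le_sup_right.trans h.symm.le) hc.le).symm

theorem inf_lt_of_ne {ν ρ : YoungDiagram} (hne : ν ≠ ρ) (hc : ν.card = ρ.card) : ν ⊓ ρ < ν :=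
  lt_of_le_of_ne inf_le_left fun h =>
    hne (eq_of_le_of_card_le (h.symm.le.trans inf_le_right) hc.ge)

theorem upperCovers_inter_of_ne {ν ρ : YoungDiagram} (hne : ν ≠ ρ) (hc : ν.card = ρ.card) :
    upperCovers ν ∩ upperCovers ρ = ({ν ⊔ ρ} : Finset _).filter (·.card = ν.card + 1) := by
  ext l
  simp only [mem_inter, mem_upperCovers, mem_filter, mem_singleton]
  constructor
  · rintro ⟨⟨hνl, hl⟩, hρl, -⟩
    have hsup := sup_le hνl hρl
    have := card_lt_card (lt_sup_of_ne hne hc)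
    exact ⟨(eq_of_le_of_card_le hsup (by omega)).symm, hl⟩
  · rintro ⟨rfl, hl⟩
    exact ⟨⟨le_sup_left, hl⟩, le_sup_right, by omega⟩

theorem lowerCovers_inter_of_ne {ν ρ : YoungDiagram} (hne : ν ≠ ρ) (hc : ν.card = ρ.card) :
    lowerCovers ν ∩ lowerCovers ρ = ({ν ⊓ ρ} : Finset _).filter (ν.card = ·.card + 1) := by
  ext σ
  simp only [mem_inter, mem_lowerCovers, mem_filter, mem_singleton]
  constructor
  · rintro ⟨⟨hσν, hσ⟩, hσρ, -⟩
    have hinf := le_inf hσν hσρ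
    have := card_lt_card (inf_lt_of_ne hne hc)
    exact ⟨eq_of_le_of_card_le hinf (by omega), hσ⟩
  · rintro ⟨rfl, hσ⟩
    exact ⟨⟨inf_le_left, hσ⟩, inf_le_right, by omega⟩

theorem card_upperCovers_inter {ν ρ : YoungDiagram} (hc : ν.card = ρ.card) :
    #(upperCovers ν ∩ upperCovers ρ) =
      #(lowerCovers ν ∩ lowerCovers ρ) + if ν = ρ then 1 else 0 := by
  by_cases hne : ν = ρ
  · subst hne
    rw [inter_self, inter_self, if_pos rfl, card_upperCovers_eq_card_lowerCovers_add_one]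
  rw [upperCovers_inter_of_ne hne hc, lowerCovers_inter_of_ne hne hc, filter_singleton,
    filter_singleton, if_neg hne]
  have := card_sup_add_card_inf ν ρ
  split_ifs <;> simp <;> omega

end YoungDiagram

open YoungDiagram

def saturatedChains (μ l : YoungDiagram) (k : ℕ) : Set (Fin (k + 1) → YoungDiagram) :=
  {f | f 0 = μ ∧ f (Fin.last k) = l ∧
    ∀ i : Fin k, f i.castSucc ≤ f i.succ ∧ (f i.succ).card = (f i.castSucc).card + 1}

section SaturatedChains

variable {μ l : YoungDiagram} {k : ℕ}

theorem dimSkew_eq_ncard (h : l.card - μ.card = k) :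
    dimSkew μ l = (saturatedChains μ l k).ncard := by
  subst h; rfl

theorem saturatedChains_finite : (saturatedChains μ l k).Finite := by
  refine (Set.Finite.pi' fun _ => finite_setOf_le l).subset fun f hf i => ?_
  have hmono : Monotone f := Fin.monotone_iff_le_succ.2 fun i => (hf.2.2 i).1
  exact hf.2.1 ▸ hmono (Fin.le_last i)

theorem ncard_saturatedChains_zero : (saturatedChains μ l 0).ncard = if μ = l then 1 else 0 := by
  have hchains : saturatedChains μ l 0 = if μ = l then {fun _ => μ} else ∅ := by
    ext f
    simp only [saturatedChains, Fin.last_zero, IsEmpty.forall_iff, and_true, Set.mem_ofPred_eq]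
    split_ifs with h
    · subst h
      simp only [and_self, Set.mem_singleton_iff]
      exact ⟨fun h => funext fun i => Fin.eq_zero i ▸ h, fun h => h ▸ rfl⟩
    · simp only [Set.mem_empty_iff_false, iff_false]
      exact fun ⟨h₀, h₁⟩ => h (h₀ ▸ h₁)
  rw [hchains]
  split_ifs <;> simp

theorem snoc_mem_saturatedChains {ν : YoungDiagram} {g : Fin (k + 1) → YoungDiagram}
    (hg : g ∈ saturatedChains μ ν k) (hν : ν ∈ lowerCovers l) :
    (Fin.snoc g l : Fin (k + 2) → YoungDiagram) ∈ saturatedChains μ l (k + 1) := by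
  obtain ⟨hg₀, hgk, hg⟩ := hg
  refine ⟨by rw [← Fin.castSucc_zero, Fin.snoc_castSucc, hg₀], Fin.snoc_last _ _, fun i => ?_⟩
  induction i using Fin.lastCases with
  | last =>
    rw [Fin.succ_last, Fin.snoc_last, Fin.snoc_castSucc, hgk]
    exact mem_lowerCovers.1 hν
  | cast j =>
    rw [Fin.succ_castSucc, Fin.snoc_castSucc, Fin.snoc_castSucc]
    exact hg j

theorem init_mem_saturatedChains {f : Fin (k + 2) → YoungDiagram}
    (hf : f ∈ saturatedChains μ l (k + 1)) :
    Fin.init f ∈ saturatedChains μ (f (Fin.last k).castSucc) k :=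
  ⟨hf.1, rfl, fun i => by simpa only [Fin.init, Fin.succ_castSucc] using hf.2.2 i.castSucc⟩

theorem penultimate_mem_lowerCovers {f : Fin (k + 2) → YoungDiagram}
    (hf : f ∈ saturatedChains μ l (k + 1)) : f (Fin.last k).castSucc ∈ lowerCovers l := by
  obtain ⟨hle, hcard⟩ := hf.2.2 (Fin.last k)
  rw [Fin.succ_last, hf.2.1] at hle hcard
  exact mem_lowerCovers.2 ⟨hle, hcard⟩

noncomputable def saturatedChainsSuccEquiv (μ l : YoungDiagram) (k : ℕ) :
    (Σ ν : lowerCovers l, saturatedChains μ ν k) ≃ saturatedChains μ l (k + 1) where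
  toFun p := ⟨Fin.snoc p.2.1 l, snoc_mem_saturatedChains p.2.2 p.1.2⟩
  invFun f := ⟨⟨_, penultimate_mem_lowerCovers f.2⟩, ⟨_, init_mem_saturatedChains f.2⟩⟩
  left_inv := fun ⟨⟨ν, hν⟩, g, hg⟩ => by
    refine Sigma.subtype_ext (Subtype.ext ?_) ?_
    · simpa using hg.2.1
    · exact Fin.init_snoc (α := fun _ => YoungDiagram) l g
  right_inv := fun ⟨f, hf⟩ => Subtype.ext (by simpa [hf.2.1] using Fin.snoc_init_self f)

theorem ncard_saturatedChains_succ :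
    (saturatedChains μ l (k + 1)).ncard = ∑ ν ∈ lowerCovers l, (saturatedChains μ ν k).ncard := by
  have : ∀ ν : lowerCovers l, Finite (saturatedChains μ ν k) :=
    fun _ => saturatedChains_finite.to_subtype
  rw [← Nat.card_coe_set_eq, ← Nat.card_congr (saturatedChainsSuccEquiv μ l k),
    Nat.card_sigma, ← Finset.sum_coe_sort (lowerCovers l)]
  simp only [Nat.card_coe_set_eq]

end SaturatedChains

theorem dimSkew_of_card_le {μ l : YoungDiagram} (h : l.card ≤ μ.card) :
    dimSkew μ l = if μ = l then 1 else 0 := by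
  rw [dimSkew_eq_ncard (Nat.sub_eq_zero_of_le h), ncard_saturatedChains_zero]

theorem dimSkew_eq_sum_lowerCovers {μ l : YoungDiagram} (h : μ.card < l.card) :
    dimSkew μ l = ∑ ν ∈ lowerCovers l, dimSkew μ ν := by
  obtain ⟨k, hk⟩ : ∃ k, l.card - μ.card = k + 1 := ⟨l.card - μ.card - 1, by omega⟩
  rw [dimSkew_eq_ncard hk, ncard_saturatedChains_succ]
  refine sum_congr rfl fun ν hν => (dimSkew_eq_ncard ?_).symm
  have := (mem_lowerCovers.1 hν).2
  omega

theorem dimSYT_eq_sum_lowerCovers {l : YoungDiagram} (h : 0 < l.card) :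
    dimSYT l = ∑ ν ∈ lowerCovers l, dimSYT ν :=
  dimSkew_eq_sum_lowerCovers (by simpa [YoungDiagram.card, cells_bot] using h)

theorem sum_sum_lowerCovers {M : Type*} [AddCommMonoid M] (n : ℕ)
    (f : YoungDiagram → YoungDiagram → M) :
    ∑ l ∈ ofCard (n + 1), ∑ ν ∈ lowerCovers l, f ν l =
      ∑ ν ∈ ofCard n, ∑ l ∈ upperCovers ν, f ν l :=
  sum_comm' fun l ν => by
    simp only [mem_ofCard, mem_lowerCovers, mem_upperCovers]
    grind

theorem sum_upperCovers_dimSYT (ν : YoungDiagram) :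
    ∑ l ∈ upperCovers ν, dimSYT l = (ν.card + 1) * dimSYT ν := by
  have hdown : ∑ σ ∈ lowerCovers ν, ∑ ρ ∈ upperCovers σ, dimSYT ρ = ν.card * dimSYT ν := by
    calc ∑ σ ∈ lowerCovers ν, ∑ ρ ∈ upperCovers σ, dimSYT ρ
        = ∑ σ ∈ lowerCovers ν, ν.card * dimSYT σ := sum_congr rfl fun σ hσ => by
          rw [sum_upperCovers_dimSYT σ, (mem_lowerCovers.1 hσ).2]
      _ = ν.card * dimSYT ν := by
          rw [← mul_sum]
          rcases Nat.eq_zero_or_pos ν.card with h | h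
          · rw [h, zero_mul, zero_mul]
          · rw [← dimSYT_eq_sum_lowerCovers h]
  calc ∑ l ∈ upperCovers ν, dimSYT l
      = ∑ l ∈ upperCovers ν, ∑ ρ ∈ lowerCovers l, dimSYT ρ := sum_congr rfl fun l hl =>
        dimSYT_eq_sum_lowerCovers (by have := (mem_upperCovers.1 hl).2; omega)
    _ = ∑ ρ ∈ ofCard ν.card, ∑ _l ∈ upperCovers ν ∩ upperCovers ρ, dimSYT ρ :=
        sum_comm' fun l ρ => by
          simp only [mem_inter, mem_ofCard, mem_lowerCovers, mem_upperCovers]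
          grind
    _ = ∑ ρ ∈ ofCard ν.card,
          (∑ _σ ∈ lowerCovers ν ∩ lowerCovers ρ, dimSYT ρ + if ν = ρ then dimSYT ρ else 0) :=
        sum_congr rfl fun ρ hρ => by
          rw [sum_const, sum_const, card_upperCovers_inter (mem_ofCard.1 hρ).symm]
          split_ifs <;> simp [add_mul]
    _ = ∑ σ ∈ lowerCovers ν, ∑ ρ ∈ upperCovers σ, dimSYT ρ + dimSYT ν := by
        rw [sum_add_distrib, sum_ite_eq, if_pos (mem_ofCard.2 rfl)]
        congr 1
        refine sum_comm' fun ρ σ => ?_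
        simp only [mem_inter, mem_ofCard, mem_lowerCovers, mem_upperCovers]
        grind
    _ = (ν.card + 1) * dimSYT ν := by rw [hdown]; ring
termination_by ν.card
decreasing_by
  have := (mem_lowerCovers.1 hσ).2
  omega

theorem sum_ofCard_dimSkew_mul_dimSYT (μ : YoungDiagram) (k : ℕ) :
    ∑ l ∈ ofCard (μ.card + k), dimSkew μ l * dimSYT l =
      (μ.card + k).descFactorial k * dimSYT μ := by
  induction k with
  | zero =>
    calc ∑ l ∈ ofCard μ.card, dimSkew μ l * dimSYT l
        = ∑ l ∈ ofCard μ.card, if μ = l then dimSYT l else 0 := sum_congr rfl fun l hl => by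
          rw [dimSkew_of_card_le (mem_ofCard.1 hl).le, ite_mul, one_mul, zero_mul]
      _ = _ := by rw [sum_ite_eq, if_pos (mem_ofCard.2 rfl), Nat.descFactorial_zero, one_mul]
  | succ k ih =>
    calc ∑ l ∈ ofCard (μ.card + k + 1), dimSkew μ l * dimSYT l
        = ∑ l ∈ ofCard (μ.card + k + 1), ∑ ν ∈ lowerCovers l, dimSkew μ ν * dimSYT l :=
          sum_congr rfl fun l hl => by
            rw [dimSkew_eq_sum_lowerCovers (by rw [mem_ofCard.1 hl]; omega), sum_mul]
      _ = ∑ ν ∈ ofCard (μ.card + k), ∑ l ∈ upperCovers ν, dimSkew μ ν * dimSYT l :=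
          sum_sum_lowerCovers _ _
      _ = ∑ ν ∈ ofCard (μ.card + k), (μ.card + k + 1) * (dimSkew μ ν * dimSYT ν) :=
          sum_congr rfl fun ν hν => by
            rw [← mul_sum, sum_upperCovers_dimSYT, mem_ofCard.1 hν]; ring
      _ = (μ.card + (k + 1)).descFactorial (k + 1) * dimSYT μ := by
          rw [← mul_sum, ih, ← add_assoc, Nat.succ_descFactorial_succ]; ring

theorem plancherelAvg_eq_sum (n : ℕ) (F : YoungDiagram → ℝ) :
    plancherelAvg n F = ∑ l ∈ ofCard n, F l * ((dimSYT l : ℝ) ^ 2 / n.factorial) := by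
  rw [plancherelAvg, ← (finite_setOf_card_eq n).coe_toFinset, finsum_mem_coe_finset]
  rfl

/-- The Plancherel average of `F_μ(λ) = |λ|^{↓m} · dim(μ,λ)/dim λ` equals
`C(n,m) · dim μ`, where `m = |μ|`. -/
theorem plancherel_average_F_mu (μ : YoungDiagram) (n : ℕ) :
    plancherelAvg n
      (fun lam => (lam.card.descFactorial μ.card : ℝ) *
        (dimSkew μ lam : ℝ) / (dimSYT lam : ℝ))
      = (n.choose μ.card : ℝ) * (dimSYT μ : ℝ) := by
  have hterm : ∀ l ∈ ofCard n,
      (l.card.descFactorial μ.card * dimSkew μ l / dimSYT l : ℝ) * (dimSYT l ^ 2 / n.factorial) =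
        n.descFactorial μ.card / n.factorial * (dimSkew μ l * dimSYT l : ℕ) := fun l hl => by
    rw [mem_ofCard.1 hl]
    rcases eq_or_ne (dimSYT l : ℝ) 0 with h | h
    · simp [h]
    · push_cast; field_simp
  rw [plancherelAvg_eq_sum, sum_congr rfl hterm, ← mul_sum, ← Nat.cast_sum]
  rcases lt_or_ge n μ.card with hlt | hle
  · simp [Nat.descFactorial_eq_zero_iff_lt.2 hlt, Nat.choose_eq_zero_of_lt hlt]
  obtain ⟨k, rfl⟩ := Nat.exists_eq_add_of_le hle
  have key : ((μ.card + k).descFactorial μ.card * (μ.card + k).descFactorial k : ℝ) =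
      (μ.card + k).factorial * (μ.card + k).choose μ.card := by
    exact_mod_cast Nat.add_descFactorial_mul_descFactorial μ.card k
  rw [sum_ofCard_dimSkew_mul_dimSYT]
  push_cast
  field_simp
  linear_combination (dimSYT μ : ℝ) * key
end

section
/- For every Young diagram λ, the identity Φ(u − 1/2; λ) = Π_{i=1}^{d(λ)} (u + b_i)/(u − a_i) holds as an identity of rational functions in u; explicitly, Π_{i=1}^{ℓ(λ)} (u − 1/2 + i)/(u − 1/2 − λ_i + i) = Π_{i=1}^{d(λ)} (u + b_i)/(u − a_i). -/
/-!
Index rows from `0`, write `d = d(λ)` and `n = ℓ(λ)`. The leg lengths `λ'_j - j - 1` of the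
diagonal boxes (`j < d`) and the numbers `i - λ_i` for the rows `d ≤ i < n` together list
`0, …, n - 1`, each exactly once. Reindexing the numerator `∏_{k < n} (u + 1/2 + k)` of
`Φ(u - 1/2; λ)` by this permutation turns its factors into `u + b_j` for `j < d` and into the
denominator factors `u + 1/2 + i - λ_i` of the rows `i ≥ d`, which cancel; the remaining
denominator factors are `u - a_j`.
-/

open scoped BigOperators Classical

/-- Number of diagonal boxes `d(λ)`. -/
def dDiag (lam : YoungDiagram) : ℕ :=
  ((Finset.range (lam.colLen 0)).filter fun i => i < lam.rowLen i).card

/-- Modified Frobenius coordinate `a_{i+1} = λ_{i+1} - (i+1) + 1/2` (zero-based `i`). -/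
noncomputable def aFrob (lam : YoungDiagram) (i : ℕ) : ℝ :=
  (lam.rowLen i : ℝ) - ((i : ℝ) + 1) + 1 / 2

/-- Modified Frobenius coordinate `b_{i+1} = λ′_{i+1} - (i+1) + 1/2` (zero-based `i`). -/
noncomputable def bFrob (lam : YoungDiagram) (i : ℕ) : ℝ :=
  (lam.colLen i : ℝ) - ((i : ℝ) + 1) + 1 / 2

open Finset

theorem Antitone.lt_card_filter_range_iff {p : ℕ → Prop} [DecidablePred p] (hp : Antitone p)
    {n i : ℕ} : i < #{j ∈ range n | p j} ↔ i < n ∧ p i := by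
  induction n with
  | zero => simp
  | succ n ih =>
    by_cases hn : p n
    · have hall : {j ∈ range (n + 1) | p j} = range (n + 1) :=
        filter_true_of_mem fun j hj => hp (Nat.lt_succ_iff.mp (mem_range.mp hj)) hn
      rw [hall, card_range]
      exact ⟨fun hi => ⟨hi, hp (Nat.lt_succ_iff.mp hi) hn⟩, And.left⟩
    · rw [range_add_one, filter_insert, if_neg hn, ih]
      exact ⟨fun h => ⟨by omega, h.2⟩, fun ⟨hin, hpi⟩ =>
        ⟨lt_of_le_of_ne (Nat.lt_succ_iff.mp hin) (by rintro rfl; exact hn hpi), hpi⟩⟩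

namespace YoungDiagram

variable (μ : YoungDiagram) {i j : ℕ}

theorem lt_dDiag_iff_lt_rowLen : i < dDiag μ ↔ i < μ.rowLen i := by
  have hanti : Antitone fun i => i < μ.rowLen i := fun i j hij hj =>
    lt_of_le_of_lt hij (lt_of_lt_of_le hj (μ.rowLen_anti i j hij))
  rw [dDiag, hanti.lt_card_filter_range_iff, and_iff_right_iff_imp, ← mem_iff_lt_rowLen]
  exact fun hii => mem_iff_lt_colLen.mp (μ.up_left_mem le_rfl (Nat.zero_le i) hii)

theorem lt_dDiag_iff_lt_colLen : i < dDiag μ ↔ i < μ.colLen i := by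
  rw [lt_dDiag_iff_lt_rowLen, ← mem_iff_lt_rowLen, mem_iff_lt_colLen]

theorem dDiag_le_iff_rowLen_le : dDiag μ ≤ i ↔ μ.rowLen i ≤ i := by
  simpa only [not_lt] using μ.lt_dDiag_iff_lt_rowLen.not

theorem dDiag_le_colLen_zero : dDiag μ ≤ μ.colLen 0 :=
  (card_filter_le _ _).trans (card_range _).le

def frobeniusPerm (i : ℕ) : ℕ :=
  if i < dDiag μ then μ.colLen i - i - 1 else i - μ.rowLen i

theorem colLen_sub_sub_one_ne_sub_rowLen (hj : j < dDiag μ) (hi : dDiag μ ≤ i) :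
    μ.colLen j - j - 1 ≠ i - μ.rowLen i := by
  have hjj := μ.lt_dDiag_iff_lt_colLen.mp hj
  have hii := μ.dDiag_le_iff_rowLen_le.mp hi
  by_cases hij : (i, j) ∈ μ
  · have := mem_iff_lt_rowLen.mp hij
    have := mem_iff_lt_colLen.mp hij
    omega
  · have := not_lt.mp (mt mem_iff_lt_rowLen.mpr hij)
    have := not_lt.mp (mt mem_iff_lt_colLen.mpr hij)
    omega

theorem frobeniusPerm_injective : Function.Injective μ.frobeniusPerm := by
  intro i j hij
  unfold frobeniusPerm at hij
  split_ifs at hij with hi hj hj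
  · have := μ.lt_dDiag_iff_lt_colLen.mp hi
    have := μ.lt_dDiag_iff_lt_colLen.mp hj
    rcases le_total i j with h | h
    · have := μ.colLen_anti i j h; omega
    · have := μ.colLen_anti j i h; omega
  · exact absurd hij (μ.colLen_sub_sub_one_ne_sub_rowLen hi (not_lt.mp hj))
  · exact absurd hij.symm (μ.colLen_sub_sub_one_ne_sub_rowLen hj (not_lt.mp hi))
  · have := μ.dDiag_le_iff_rowLen_le.mp (not_lt.mp hi)
    have := μ.dDiag_le_iff_rowLen_le.mp (not_lt.mp hj)
    rcases le_total i j with h | h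
    · have := μ.rowLen_anti i j h; omega
    · have := μ.rowLen_anti j i h; omega

theorem frobeniusPerm_lt_colLen_zero (hi : i < μ.colLen 0) : μ.frobeniusPerm i < μ.colLen 0 := by
  unfold frobeniusPerm
  split_ifs with hd
  · have := μ.colLen_anti 0 i (Nat.zero_le i)
    omega
  · have := mem_iff_lt_rowLen.mp (mem_iff_lt_colLen.mpr hi)
    omega

theorem prod_range_colLen_zero_comp_frobeniusPerm {M : Type*} [CommMonoid M] (f : ℕ → M) :
    ∏ i ∈ range (μ.colLen 0), f (μ.frobeniusPerm i) = ∏ i ∈ range (μ.colLen 0), f i := by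
  have hmaps : Set.MapsTo μ.frobeniusPerm (range (μ.colLen 0)) (range (μ.colLen 0)) :=
    fun i hi => mem_range.mpr (μ.frobeniusPerm_lt_colLen_zero (mem_range.mp hi))
  have hbij := ((range (μ.colLen 0)).finite_toSet.injOn_iff_bijOn_of_mapsTo hmaps).mp
    μ.frobeniusPerm_injective.injOn
  exact prod_nbij μ.frobeniusPerm hmaps hbij.injOn hbij.surjOn fun _ _ => rfl

theorem cast_frobeniusPerm_of_lt_dDiag {R : Type*} [AddCommGroupWithOne R] (hi : i < dDiag μ) :
    (μ.frobeniusPerm i : R) = μ.colLen i - i - 1 := by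
  rw [frobeniusPerm, if_pos hi, Nat.sub_sub, Nat.cast_sub (μ.lt_dDiag_iff_lt_colLen.mp hi),
    Nat.cast_succ, sub_add_eq_sub_sub]

theorem cast_frobeniusPerm_of_dDiag_le {R : Type*} [AddCommGroupWithOne R] (hi : dDiag μ ≤ i) :
    (μ.frobeniusPerm i : R) = i - μ.rowLen i := by
  rw [frobeniusPerm, if_neg hi.not_gt, Nat.cast_sub (μ.dDiag_le_iff_rowLen_le.mp hi)]

end YoungDiagram

theorem char_fun_eq_frobenius_product_general (lam : YoungDiagram) (u : ℝ)
    (h1 : ∀ i < lam.colLen 0, u - 1 / 2 - (lam.rowLen i : ℝ) + ((i : ℝ) + 1) ≠ 0) :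
    ∏ i ∈ Finset.range (lam.colLen 0),
        (u - 1 / 2 + ((i : ℝ) + 1)) / (u - 1 / 2 - (lam.rowLen i : ℝ) + ((i : ℝ) + 1))
      = ∏ i ∈ Finset.range (dDiag lam), (u + bFrob lam i) / (u - aFrob lam i) := by
  set n := lam.colLen 0
  set d := dDiag lam
  have hdn : d ≤ n := lam.dDiag_le_colLen_zero
  set den : ℕ → ℝ := fun i => u - 1 / 2 - (lam.rowLen i : ℝ) + ((i : ℝ) + 1)
  have hnum : ∏ i ∈ range n, (u - 1 / 2 + ((i : ℝ) + 1))
      = (∏ i ∈ range d, (u + bFrob lam i)) * ∏ i ∈ Ico d n, den i := by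
    rw [← lam.prod_range_colLen_zero_comp_frobeniusPerm, ← prod_range_mul_prod_Ico _ hdn]
    congr 1 <;> refine prod_congr rfl fun i hi => ?_
    · rw [lam.cast_frobeniusPerm_of_lt_dDiag (mem_range.mp hi), bFrob]; ring
    · rw [lam.cast_frobeniusPerm_of_dDiag_le (mem_Ico.mp hi).1]; ring
  have hden : ∏ i ∈ range n, den i
      = (∏ i ∈ range d, (u - aFrob lam i)) * ∏ i ∈ Ico d n, den i := by
    rw [← prod_range_mul_prod_Ico _ hdn]
    congr 1
    exact prod_congr rfl fun i _ => by simp only [den, aFrob]; ring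
  have hden_ne : ∏ i ∈ Ico d n, den i ≠ 0 :=
    prod_ne_zero_iff.mpr fun i hi => h1 i (mem_Ico.mp hi).2
  rw [prod_div_distrib, prod_div_distrib, hnum, hden, mul_div_mul_right _ _ hden_ne]

/-- `Φ(u - 1/2; λ) = ∏_{i=1}^{d(λ)} (u + b_i)/(u - a_i)` as rational functions in `u`,
i.e. the identity holds for every `u` where both sides are defined. -/
theorem char_fun_eq_frobenius_product (lam : YoungDiagram) (u : ℝ)
    (h1 : ∀ i < lam.colLen 0, u - 1 / 2 - (lam.rowLen i : ℝ) + ((i : ℝ) + 1) ≠ 0)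
    (h2 : ∀ i < dDiag lam, u - aFrob lam i ≠ 0) :
    ∏ i ∈ Finset.range (lam.colLen 0),
        (u - 1 / 2 + ((i : ℝ) + 1)) / (u - 1 / 2 - (lam.rowLen i : ℝ) + ((i : ℝ) + 1))
      = ∏ i ∈ Finset.range (dDiag lam), (u + bFrob lam i) / (u - aFrob lam i) :=
  char_fun_eq_frobenius_product_general lam u h1
end

section
/- The algebra A of regular functions on Y coincides with the unital ℝ-subalgebra of the algebra of all functions Y → ℝ generated by the content power sums p̂_0, p̂_1, p̂_2, …. That is, the subalgebra generated by {p*_m : m ≥ 1} equals the subalgebra generated by {p̂_r : r ≥ 0} (equivalently, A is generated by the function λ ↦ |λ| together with all functions of the form G_φ(λ) = φ(c_1(λ),…,c_{|λ|}(λ),0,0,…) with φ a symmetric function). -/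
open scoped BigOperators Classical

/-!
Summing the telescoping differences `(j - i)^m - (j - i - 1)^m` along row `i` shows that
`p*_m(λ) = ∑_{□ ∈ λ} (c(□)^m - (c(□) - 1)^m)`. Expanding binomially,
`p*_{m+1} = (m + 1) p̂_m + ∑_{k < m} a_{m+1,k} p̂_k`, a triangular change of generators with
invertible diagonal, so `{p*_{m+1}}` and `{p̂_m}` span the same subspace and
hence generate the same subalgebra.
-/

open Finset

theorem YoungDiagram.sum_cells_eq_sum_rowLen {M : Type*} [AddCommMonoid M] (μ : YoungDiagram)
    (f : ℕ × ℕ → M) :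
    ∑ c ∈ μ.cells, f c = ∑ i ∈ range (μ.colLen 0), ∑ j ∈ range (μ.rowLen i), f (i, j) := by
  refine sum_finset_product _ _ _ fun ⟨i, j⟩ => ?_
  simp only [mem_cells, mem_range, ← mem_iff_lt_rowLen, ← mem_iff_lt_colLen, iff_and_self]
  exact fun h => μ.up_left_mem le_rfl (Nat.zero_le j) h

theorem Submodule.span_range_eq_of_triangular {R M : Type*} [Ring R] [AddCommGroup M]
    [Module R M] (f g : ℕ → M) (a : ℕ → ℕ → R)
    (hg : ∀ n, g n = ∑ k ∈ range (n + 1), a n k • f k) (ha : ∀ n, IsUnit (a n n)) :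
    span R (Set.range g) = span R (Set.range f) := by
  apply le_antisymm <;> rw [span_le] <;> rintro _ ⟨n, rfl⟩
  · rw [hg]
    exact sum_mem fun k _ => smul_mem _ _ (subset_span ⟨k, rfl⟩)
  · induction n using Nat.strong_induction_on with
    | _ n ih =>
      have hdiag : a n n • f n = g n - ∑ k ∈ range n, a n k • f k := by
        rw [hg, sum_range_succ, add_sub_cancel_left]
      rw [SetLike.mem_coe, ← smul_mem_iff_of_isUnit _ (ha n), hdiag]
      exact sub_mem (subset_span ⟨n, rfl⟩)
        (sum_mem fun k hk => smul_mem _ _ (ih k (mem_range.mp hk)))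

def binomDiffCoeff (m k : ℕ) : ℤ := -((-1) ^ (m - k) * m.choose k)

theorem binomDiffCoeff_succ_self {R : Type*} [Ring R] (m : ℕ) :
    (binomDiffCoeff (m + 1) m : R) = m + 1 := by
  simp [binomDiffCoeff, Nat.choose_succ_self_right]

theorem pow_sub_sub_one_pow {R : Type*} [CommRing R] (m : ℕ) (x : R) :
    x ^ m - (x - 1) ^ m = ∑ k ∈ range m, (binomDiffCoeff m k : R) * x ^ k := by
  rw [sub_eq_add_neg x, add_pow, sum_range_succ]
  simp [binomDiffCoeff, sum_neg_distrib, mul_comm, mul_left_comm]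

theorem pstar_eq_sum_cells (m : ℕ) (μ : YoungDiagram) :
    pstar m μ = ∑ c ∈ μ.cells, (((c.2 : ℝ) - c.1) ^ m - ((c.2 : ℝ) - c.1 - 1) ^ m) := by
  rw [pstar, μ.sum_cells_eq_sum_rowLen]
  refine sum_congr rfl fun i _ => ?_
  have htelescope := sum_range_sub (fun j : ℕ => ((j : ℝ) - (i + 1)) ^ m) (μ.rowLen i)
  simp only [Nat.cast_zero, zero_sub, Nat.cast_succ] at htelescope
  rw [← htelescope]
  refine sum_congr rfl fun j _ => ?_
  ring_nf

theorem pstar_eq_sum_phat (m : ℕ) :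
    pstar m = ∑ k ∈ range m, (binomDiffCoeff m k : ℝ) • phat k := by
  funext μ
  simp only [pstar_eq_sum_cells, pow_sub_sub_one_pow, Finset.sum_apply, Pi.smul_apply, phat,
    smul_eq_mul, mul_sum]
  exact sum_comm

/-- The algebra `A` of regular functions coincides with the unital subalgebra
generated by the content power sums `p̂_0, p̂_1, p̂_2, …`. -/
theorem regularAlg_eq_adjoin_content_power_sums :
    regularAlg = Algebra.adjoin ℝ {f | ∃ r : ℕ, f = phat r} := by
  have hpstar : {f | ∃ m : ℕ, 1 ≤ m ∧ f = pstar m} = Set.range fun n => pstar (n + 1) := by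
    ext f
    constructor
    · rintro ⟨m, hm, rfl⟩
      exact ⟨m - 1, congrArg pstar (Nat.sub_add_cancel hm)⟩
    · rintro ⟨n, rfl⟩
      exact ⟨n + 1, n.succ_pos, rfl⟩
  have hphat : {f | ∃ r : ℕ, f = phat r} = Set.range phat :=
    Set.ext fun f => exists_congr fun r => eq_comm
  have hspan : Submodule.span ℝ (Set.range fun n => pstar (n + 1)) =
      Submodule.span ℝ (Set.range phat) := by
    refine Submodule.span_range_eq_of_triangular phat _ (fun n k => binomDiffCoeff (n + 1) k)
      (fun n => pstar_eq_sum_phat (n + 1)) fun n => ?_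
    rw [binomDiffCoeff_succ_self]
    exact (Nat.cast_add_one_ne_zero n).isUnit
  rw [regularAlg, hpstar, hphat, ← Algebra.adjoin_span, hspan, Algebra.adjoin_span]
end

section
/- The content power sums p̂_0, p̂_1, p̂_2, … are algebraically independent as functions on Y: for every k ≥ 0, if a polynomial f ∈ ℝ[X_0, X_1, …, X_k] satisfies f(p̂_0(λ), p̂_1(λ), …, p̂_k(λ)) = 0 for every Young diagram λ, then f = 0. (Thus the algebra A of regular functions is freely generated by the functions p̂_r.) -/
/-!
Let `λ` have rows `x₀ ≥ x₁ ≥ ⋯ ≥ x_{n-1}`. With the Faulhaber polynomials `S_r = B_{r+1}/(r+1)`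
(`B` the Bernoulli polynomials), row `i` contributes
`∑_{j < xᵢ} (j - i)^r = S_r(xᵢ - i) - S_r(-i)` to `p̂_r(λ)`, so `p̂_r(λ) = G_r(x)` for a polynomial
map `G : ℝⁿ → ℝⁿ`. If `f(p̂(λ)) = 0` for all `λ`, the polynomial `f ∘ G` vanishes at every antitone
point of `ℕⁿ`; these contain arbitrarily large boxes, so `f ∘ G = 0`. The Jacobian of `G` at `0`
is `(B_r(-i))_{r,i}`, a Vandermonde matrix up to a unitriangular change of basis because `B_r` is
monic of degree `r`. By the inverse function theorem `G` maps a neighbourhood of `0` onto a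
neighbourhood of `G 0`, so `f` vanishes on an open set and `f = 0`.
-/

open scoped BigOperators Classical

open Finset Filter Topology

namespace Polynomial

theorem natDegree_bernoulli (r : ℕ) : (bernoulli r).natDegree = r := by
  refine natDegree_eq_of_le_of_coeff_ne_zero ?_ (by simp [coeff_bernoulli])
  exact natDegree_le_iff_coeff_eq_zero.mpr fun i hi => by
    simp [coeff_bernoulli, not_le.mpr (Nat.cast_lt.mp hi)]

theorem monic_bernoulli (r : ℕ) : (bernoulli r).Monic := by
  simp [Monic, leadingCoeff, natDegree_bernoulli, coeff_bernoulli]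

noncomputable def faulhaber (r : ℕ) : ℝ[X] :=
  ((r : ℝ) + 1)⁻¹ • (bernoulli (r + 1)).map (algebraMap ℚ ℝ)

theorem faulhaber_eval_add_one_sub (r : ℕ) (x : ℝ) :
    (faulhaber r).eval (x + 1) - (faulhaber r).eval x = x ^ r := by
  have h := congr_arg (aeval x) (bernoulli_comp_one_add_X (r + 1))
  simp only [aeval_comp, map_add, map_one, aeval_X, nsmul_eq_mul, add_tsub_cancel_right,
    Nat.cast_add_one, add_comm 1 x, map_mul, map_natCast, map_pow] at h
  have hr : (r : ℝ) + 1 ≠ 0 := by positivity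
  simp only [faulhaber, eval_smul, smul_eq_mul, ← mul_sub, eval_map_algebraMap, h]
  field_simp
  ring

theorem derivative_faulhaber (r : ℕ) :
    derivative (faulhaber r) = (bernoulli r).map (algebraMap ℚ ℝ) := by
  have hr : (r : ℝ) + 1 ≠ 0 := by positivity
  rw [faulhaber, derivative_smul, derivative_map, derivative_bernoulli_add_one,
    show (r : ℚ[X]) + 1 = C ((r : ℚ) + 1) by simp, Polynomial.map_mul, map_C, smul_eq_C_mul,
    ← mul_assoc, ← C_mul]
  simp [hr]

theorem sum_range_add_pow_eq_faulhaber_sub (r m : ℕ) (a : ℝ) :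
    ∑ j ∈ range m, ((j : ℝ) + a) ^ r = (faulhaber r).eval (m + a) - (faulhaber r).eval a := by
  have := sum_range_sub (fun j : ℕ => (faulhaber r).eval (j + a)) m
  simp only [Nat.cast_add, Nat.cast_one, Nat.cast_zero, zero_add] at this
  rw [← this]
  refine sum_congr rfl fun j _ => ?_
  rw [← faulhaber_eval_add_one_sub, add_right_comm]

end Polynomial

namespace MvPolynomial

theorem eval_bind₁ {σ τ R : Type*} [CommSemiring R] (x : τ → R) (g : σ → MvPolynomial τ R)
    (φ : MvPolynomial σ R) : eval x (bind₁ g φ) = eval (fun i => eval x (g i)) φ :=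
  eval₂Hom_bind₁ _ _ _ _

/-- The antitone points contain the box `∏ᵢ [M·(n-1-i), M·(n-i))`, whose sides exceed the
degree of `P` in each variable. -/
theorem eq_zero_of_eval_antitone_eq_zero {R : Type*} [CommRing R] [IsDomain R] [CharZero R]
    {n : ℕ} (P : MvPolynomial (Fin n) R)
    (h : ∀ t : Fin n → ℕ, Antitone t → eval (fun i => (t i : R)) P = 0) : P = 0 := by
  set M := P.totalDegree + 1
  refine eq_zero_of_eval_zero_at_prod_finset P
    (fun i => (Ico (M * i.rev) (M * i.rev + M)).image Nat.cast) (fun i => ?_) (fun x hx => ?_)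
  · rw [card_image_of_injective _ Nat.cast_injective, Nat.card_Ico]
    exact Nat.lt_of_le_of_lt (degreeOf_le_totalDegree P i) (by omega)
  · simp only [mem_image, mem_Ico] at hx
    choose t ht hxt using hx
    obtain rfl : x = fun i => (t i : R) := _root_.funext fun i => (hxt i).symm
    refine h t fun i j hij => ?_
    obtain hij | rfl := hij.lt_or_eq
    · calc t j ≤ M * (j.rev + 1) := by rw [mul_add_one]; exact (ht j).2.le
        _ ≤ M * i.rev := Nat.mul_le_mul_left _ (Fin.rev_lt_rev.mpr hij)
        _ ≤ t i := (ht i).1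
    · exact le_rfl

theorem eq_zero_of_eventually_eval_eq_zero {ι : Type*} [Fintype ι] (P : MvPolynomial ι ℝ)
    {c : ι → ℝ} (h : ∀ᶠ y in 𝓝 c, eval y P = 0) : P = 0 := by
  obtain ⟨ε, hε, hball⟩ := Metric.eventually_nhds_iff_ball.mp h
  refine funext_set (fun i => Metric.ball (c i) ε) (fun i => ?_) fun y hy => ?_
  · rw [Real.ball_eq_Ioo]
    exact Set.Ioo_infinite (by linarith)
  · rw [map_zero]
    exact hball y (by rwa [ball_pi _ hε])

end MvPolynomial

namespace YoungDiagram

theorem sum_cells_ofRowLens_ofFn {M : Type*} [AddCommMonoid M] {n : ℕ} (x : Fin n → ℕ)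
    (hx : Antitone x) (g : ℕ × ℕ → M) :
    ∑ c ∈ (ofRowLens (List.ofFn x) hx.sortedGE_ofFn).cells, g c
      = ∑ i : Fin n, ∑ j ∈ range (x i), g (i, j) := by
  have hmem {c : ℕ × ℕ} : c ∈ (ofRowLens (List.ofFn x) hx.sortedGE_ofFn).cells ↔
      ∃ h : c.1 < n, c.2 < x ⟨c.1, h⟩ := by
    simp [mem_cells, mem_ofRowLens]
  rw [← sum_sigma univ (fun i => range (x i)) (fun c => g (c.1, c.2))]
  refine sum_bij' (fun c hc => ⟨⟨c.1, (hmem.mp hc).1⟩, c.2⟩) (fun c _ => (c.1, c.2))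
    (fun c hc => ?_) (fun c hc => ?_) (fun c _ => rfl) (fun c _ => rfl) (fun c _ => rfl)
  · simpa using (hmem.mp hc).2
  · simp only [mem_sigma, mem_univ, mem_range, true_and] at hc
    exact hmem.mpr ⟨c.1.2, hc⟩

end YoungDiagram

open Polynomial

noncomputable def contentPoly (n r : ℕ) : MvPolynomial (Fin n) ℝ :=
  ∑ i : Fin n, (aeval (MvPolynomial.X i - MvPolynomial.C ((i : ℕ) : ℝ)) (faulhaber r)
    - MvPolynomial.C ((faulhaber r).eval (-((i : ℕ) : ℝ))))

theorem eval_contentPoly (n r : ℕ) (x : Fin n → ℝ) :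
    MvPolynomial.eval x (contentPoly n r)
      = ∑ i : Fin n,
          ((faulhaber r).eval (x i - (i : ℕ)) - (faulhaber r).eval (-((i : ℕ) : ℝ))) := by
  simp only [contentPoly, map_sum, map_sub, MvPolynomial.eval_C]
  refine sum_congr rfl fun i _ => ?_
  rw [← MvPolynomial.coe_aeval_eq_eval, AlgHom.coe_toRingHom, ← Polynomial.aeval_algHom_apply]
  simp

theorem phat_ofRowLens_ofFn {n : ℕ} (x : Fin n → ℕ) (hx : Antitone x) (r : ℕ) :
    phat r (YoungDiagram.ofRowLens (List.ofFn x) hx.sortedGE_ofFn)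
      = MvPolynomial.eval (fun i => (x i : ℝ)) (contentPoly n r) := by
  rw [phat, YoungDiagram.sum_cells_ofRowLens_ofFn x hx, eval_contentPoly]
  refine sum_congr rfl fun i _ => ?_
  simp only [sub_eq_add_neg, sum_range_add_pow_eq_faulhaber_sub]

noncomputable def contentJacobian (n : ℕ) (a : Fin n → ℝ) : Matrix (Fin n) (Fin n) ℝ :=
  Matrix.of fun r i => (derivative (faulhaber r)).eval (a i - (i : ℕ))

theorem det_contentJacobian_zero_ne_zero (n : ℕ) : (contentJacobian n 0).det ≠ 0 := by
  have hdet := Matrix.det_eval_matrixOfPolynomials_eq_det_vandermonde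
    (fun i : Fin n => -((i : ℕ) : ℝ)) (fun r => (Polynomial.bernoulli r).map (algebraMap ℚ ℝ))
    (fun r => by rw [natDegree_map, natDegree_bernoulli]) (fun r => (monic_bernoulli r).map _)
  have hinj : Function.Injective fun i : Fin n => -((i : ℕ) : ℝ) := fun i j hij => by
    simpa [Fin.val_inj] using hij
  rw [← Matrix.det_transpose]
  convert Matrix.det_vandermonde_ne_zero_iff.mpr hinj using 1
  rw [hdet]
  congr 1
  ext i r
  simp [contentJacobian, derivative_faulhaber]

theorem hasStrictFDerivAt_eval_contentPoly (n : ℕ) (a : Fin n → ℝ) :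
    HasStrictFDerivAt (fun x (r : Fin n) => MvPolynomial.eval x (contentPoly n r))
      (LinearMap.toContinuousLinearMap (Matrix.toLin' (contentJacobian n a))) a := by
  simp only [eval_contentPoly]
  refine hasStrictFDerivAt_pi'.mpr fun r => ?_
  have hL : (ContinuousLinearMap.proj r).comp
      (LinearMap.toContinuousLinearMap (Matrix.toLin' (contentJacobian n a)))
        = ∑ i, contentJacobian n a r i • ContinuousLinearMap.proj i := by
    ext x
    simp [Matrix.toLin'_apply, Matrix.mulVec, dotProduct]
  rw [hL]
  refine HasStrictFDerivAt.fun_sum fun i _ => (hasStrictFDerivAt_sub_const_iff _).mpr ?_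
  have hcoord : HasStrictFDerivAt (fun x : Fin n → ℝ => x i - ((i : ℕ) : ℝ))
      (ContinuousLinearMap.proj (R := ℝ) i) a :=
    (hasStrictFDerivAt_sub_const_iff _).mpr (hasStrictFDerivAt_apply i a)
  exact (Polynomial.hasStrictDerivAt (faulhaber r) (a i - (i : ℕ))).comp_hasStrictFDerivAt a hcoord

theorem map_eval_contentPoly_nhds_zero (n : ℕ) :
    map (fun x (r : Fin n) => MvPolynomial.eval x (contentPoly n r)) (𝓝 0)
      = 𝓝 (fun r : Fin n => MvPolynomial.eval 0 (contentPoly n r)) := by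
  refine (hasStrictFDerivAt_eval_contentPoly n 0).map_nhds_eq_of_surj ?_
  refine LinearMap.range_eq_top.mpr (Matrix.mulVec_surjective_iff_isUnit.mpr ?_)
  exact (Matrix.isUnit_iff_isUnit_det _).mpr (det_contentJacobian_zero_ne_zero n).isUnit

/-- The content power sums `p̂_0, …, p̂_k` are algebraically independent as functions
on the set of Young diagrams. -/
theorem content_power_sums_algebraically_independent
    (k : ℕ) (f : MvPolynomial (Fin (k + 1)) ℝ)
    (hf : ∀ lam : YoungDiagram,
      MvPolynomial.eval (fun i : Fin (k + 1) => phat i.val lam) f = 0) :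
    f = 0 := by
  have hcomp : MvPolynomial.bind₁ (fun r : Fin (k + 1) => contentPoly (k + 1) r) f = 0 := by
    refine MvPolynomial.eq_zero_of_eval_antitone_eq_zero _ fun t ht => ?_
    simpa [MvPolynomial.eval_bind₁, ← phat_ofRowLens_ofFn t ht] using hf _
  refine MvPolynomial.eq_zero_of_eventually_eval_eq_zero f
    (c := fun r : Fin (k + 1) => MvPolynomial.eval 0 (contentPoly (k + 1) r)) ?_
  rw [← map_eval_contentPoly_nhds_zero, eventually_map]
  refine Eventually.of_forall fun x => ?_
  simpa [MvPolynomial.eval_bind₁] using congr_arg (MvPolynomial.eval x) hcomp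
end

section
/- For every Young diagram λ and every θ > 0, the identity H_θ(u;λ) = Φ_θ(u − θ; λ)/Φ_θ(u; λ) holds as an identity of rational functions in u; explicitly, u·Π_{j=1}^{d−1}(u − y_j) / Π_{i=1}^{d}(u − x_i) = Π_{i=1}^{ℓ(λ)} [(u − θ + θi)/(u − θ − λ_i + θi)] · Π_{i=1}^{ℓ(λ)} [(u − λ_i + θi)/(u + θi)]. -/
open scoped BigOperators Classical

/-- `p*_{m;θ}(λ) = ∑_{i=1}^{ℓ(λ)} [(λ_i - θi)^m - (-θi)^m]` (1-based rows). -/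
noncomputable def pstarTheta (θ : ℝ) (m : ℕ) (lam : YoungDiagram) : ℝ :=
  ∑ i ∈ Finset.range (lam.colLen 0),
    (((lam.rowLen i : ℝ) - θ * ((i : ℝ) + 1)) ^ m - (-(θ * ((i : ℝ) + 1))) ^ m)

/-- The algebra `A_θ` of θ-regular functions, generated by the `p*_{m;θ}`, `m ≥ 1`. -/
noncomputable def regularAlgTheta (θ : ℝ) : Subalgebra ℝ (YoungDiagram → ℝ) :=
  Algebra.adjoin ℝ {f | ∃ m : ℕ, 1 ≤ m ∧ f = pstarTheta θ m}

/-- The filtration term `A_θ^(d)`. -/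
noncomputable def AfilTheta (θ : ℝ) (d : ℕ) : Submodule ℝ (YoungDiagram → ℝ) :=
  Submodule.span ℝ {f | ∃ r : ℕ →₀ ℕ, r 0 = 0 ∧ (r.sum fun m k => m * k) ≤ d ∧
    f = r.prod fun m k => pstarTheta θ m ^ k}

/-- The increasing list `t_1 < ⋯ < t_{d-1}` of row indices `r ≥ 1` with `λ_r > λ_{r+1}`. -/
def kerovT (lam : YoungDiagram) : List ℕ :=
  ((Finset.Icc 1 (lam.colLen 0)).filter fun r => lam.rowLen r < lam.rowLen (r - 1)).sort (· ≤ ·)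

/-- The number `d` of inner corners of `λ`. -/
def kerovD (lam : YoungDiagram) : ℕ := (kerovT lam).length + 1

/-- Kerov interlacing coordinate `x_i` (with parameter `θ`), `1 ≤ i ≤ d`:
`x_1 = λ_1` and `x_{k+1} = λ_{t_k + 1} - θ t_k`. -/
noncomputable def kerovX (θ : ℝ) (lam : YoungDiagram) (i : ℕ) : ℝ :=
  if i ≤ 1 then (lam.rowLen 0 : ℝ)
  else (lam.rowLen ((kerovT lam).getD (i - 2) 0) : ℝ) - θ * ((kerovT lam).getD (i - 2) 0 : ℕ)

/-- Kerov interlacing coordinate `y_k = λ_{t_k} - θ t_k` (with parameter `θ`), `1 ≤ k ≤ d-1`. -/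
noncomputable def kerovY (θ : ℝ) (lam : YoungDiagram) (j : ℕ) : ℝ :=
  (lam.rowLen ((kerovT lam).getD (j - 1) 0 - 1) : ℝ) - θ * ((kerovT lam).getD (j - 1) 0 : ℕ)

/-- The coefficient `π_i^↑(λ) = ∏_{j=1}^{d-1}(x_i - y_j) / ∏_{l ≠ i}(x_i - x_l)`. -/
noncomputable def kerovPi (θ : ℝ) (lam : YoungDiagram) (i : ℕ) : ℝ :=
  (∏ j ∈ Finset.Icc 1 (kerovD lam - 1), (kerovX θ lam i - kerovY θ lam j)) /
  (∏ l ∈ (Finset.Icc 1 (kerovD lam)).erase i, (kerovX θ lam i - kerovX θ lam l))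

/-- The transition function `p^↑_θ(λ,ν)`: equals `π_i^↑(λ)` if `ν = λ ∪ □_i` covers `λ`
(where `□_i` is the addable box at the `i`-th inner corner), and `0` otherwise. -/
noncomputable def transUp (θ : ℝ) (lam nu : YoungDiagram) : ℝ :=
  if lam ≤ nu ∧ nu.card = lam.card + 1 then
    -- the (zero-based) row of the added box
    let r := sInf {r : ℕ | lam.rowLen r ≠ nu.rowLen r}
    kerovPi θ lam (if r = 0 then 1 else (kerovT lam).idxOf r + 2)
  else 0

/-- The marginal distributions `M′_{n;θ}` of Kerov's growth process:
`M′_{0;θ}(∅) = 1`, `M′_{n+1;θ}(ν) = ∑_{λ∈Y_n, λ⊂ν} M′_{n;θ}(λ) p^↑_θ(λ,ν)`. -/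
noncomputable def Mgrowth (θ : ℝ) : ℕ → YoungDiagram → ℝ
  | 0 => fun lam => if lam = ⊥ then 1 else 0
  | n + 1 => fun nu =>
      ∑ᶠ lam ∈ {lam : YoungDiagram | lam.card = n ∧ lam ≤ nu},
        Mgrowth θ n lam * transUp θ lam nu

/-- `h_m(λ)`: the coefficient of `u^{-m}` in the expansion of
`H_θ(u;λ) = u ∏_j (u-y_j) / ∏_i (u-x_i)` at `u = ∞`; substituting `u = 1/t`,
this is the coefficient of `t^m` in `∏_j (1 - y_j t) / ∏_i (1 - x_i t)`. -/
noncomputable def hCoeff (θ : ℝ) (lam : YoungDiagram) (m : ℕ) : ℝ :=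
  PowerSeries.coeff (R := ℝ) m
    ((∏ j ∈ Finset.Icc 1 (kerovD lam - 1),
        (1 - PowerSeries.C (R := ℝ) (kerovY θ lam j) * PowerSeries.X)) *
     (∏ i ∈ Finset.Icc 1 (kerovD lam),
        (1 - PowerSeries.C (R := ℝ) (kerovX θ lam i) * PowerSeries.X))⁻¹)

/-- Super power sums in the Kerov interlacing coordinates:
`p̃_m(λ) = ∑_{i=1}^d x_i^m - ∑_{j=1}^{d-1} y_j^m`. -/
noncomputable def ptilde (θ : ℝ) (m : ℕ) (lam : YoungDiagram) : ℝ :=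
  ∑ i ∈ Finset.Icc 1 (kerovD lam), kerovX θ lam i ^ m
    - ∑ j ∈ Finset.Icc 1 (kerovD lam - 1), kerovY θ lam j ^ m

/-- The operator `∂`: `(∂F)(λ) = -F(λ) + ∑_{ν ⊃ λ, |ν|=|λ|+1} p^↑_θ(λ,ν) F(ν)`. -/
noncomputable def delOp (θ : ℝ) (F : YoungDiagram → ℝ) (lam : YoungDiagram) : ℝ :=
  -F lam + ∑ᶠ nu ∈ {nu : YoungDiagram | lam ≤ nu ∧ nu.card = lam.card + 1},
    transUp θ lam nu * F nu


/-! Write `ℓ = ℓ(λ)` and `λ_{ℓ+1} = 0`. A row `1 ≤ t ≤ ℓ` that is not one of the `t_k` has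
`λ_t = λ_{t+1}`, so there the would-be coordinates `λ_t - θt` and `λ_{t+1} - θt` coincide.
Inserting these equal factors into both products of `H_θ` gives
`H_θ(u) = u ∏_{t=1}^{ℓ} (u - λ_t + θt) / ∏_{t=0}^{ℓ} (u - λ_{t+1} + θt)`.
On the other side `∏_{i=1}^{ℓ} (u - θ + θi)/(u + θi)` telescopes to `u/(u + θℓ)`, which is the
`t = ℓ` factor of that denominator, and the remaining factors agree one by one. -/

open Finset

theorem Finset.prod_Icc_one_eq_prod_range {M : Type*} [CommMonoid M] (f : ℕ → M) (n : ℕ) :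
    ∏ t ∈ Icc 1 n, f t = ∏ i ∈ range n, f (i + 1) := by
  rw [← Ico_add_one_right_eq_Icc, prod_Ico_eq_prod_range, add_tsub_cancel_right]
  exact prod_congr rfl fun i _ => by rw [add_comm]

theorem Finset.prod_Icc_getD_sort {M : Type*} [CommMonoid M] (s : Finset ℕ) (f : ℕ → M) :
    ∏ j ∈ Icc 1 (s.sort (· ≤ ·)).length, f ((s.sort (· ≤ ·)).getD (j - 1) 0) = ∏ t ∈ s, f t := by
  rw [prod_Icc_one_eq_prod_range, ← Fin.prod_univ_eq_prod_range, ← s.prod_map_toList f,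
    ← ((s.sort_perm_toList (· ≤ ·)).map f).prod_eq, ← Fin.prod_univ_fun_getElem]
  exact prod_congr rfl fun i _ => by simp [List.getElem?_eq_getElem i.isLt]

theorem Finset.prod_range_mul_eq_mul_prod_range_succ {M : Type*} [CommMonoid M] (f : ℕ → M)
    (n : ℕ) : (∏ i ∈ range n, f i) * f n = f 0 * ∏ i ∈ range n, f (i + 1) := by
  rw [← prod_range_succ, prod_range_succ', mul_comm]

theorem YoungDiagram.rowLen_colLen_zero (lam : YoungDiagram) : lam.rowLen (lam.colLen 0) = 0 :=
  Nat.eq_zero_of_not_pos fun h => lt_irrefl _ (mem_iff_lt_colLen.1 (mem_iff_lt_rowLen.2 h))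

def kerovCorners (lam : YoungDiagram) : Finset ℕ :=
  (Icc 1 (lam.colLen 0)).filter fun r => lam.rowLen r < lam.rowLen (r - 1)

theorem kerovT_eq_sort (lam : YoungDiagram) : kerovT lam = (kerovCorners lam).sort (· ≤ ·) := rfl

theorem kerovCorners_subset (lam : YoungDiagram) : kerovCorners lam ⊆ Icc 1 (lam.colLen 0) :=
  filter_subset _ _

theorem rowLen_eq_of_mem_sdiff_kerovCorners {lam : YoungDiagram} {t : ℕ}
    (ht : t ∈ Icc 1 (lam.colLen 0) \ kerovCorners lam) : lam.rowLen t = lam.rowLen (t - 1) := by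
  simp only [kerovCorners, mem_sdiff, mem_filter, not_and, not_lt] at ht
  exact (lam.rowLen_anti _ _ (Nat.sub_le t 1)).antisymm (ht.2 ht.1)

theorem lt_colLen_of_mem_sdiff_kerovCorners {lam : YoungDiagram} {t : ℕ}
    (ht : t ∈ Icc 1 (lam.colLen 0) \ kerovCorners lam) : t < lam.colLen 0 := by
  have hrow := rowLen_eq_of_mem_sdiff_kerovCorners ht
  obtain ⟨ht1, ht2⟩ := mem_Icc.1 (mem_sdiff.1 ht).1
  refine ht2.lt_of_ne fun h => ?_
  have hpos : 0 < lam.rowLen (t - 1) :=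
    YoungDiagram.mem_iff_lt_rowLen.1 (YoungDiagram.mem_iff_lt_colLen.2 (by omega))
  rw [← hrow, h, lam.rowLen_colLen_zero] at hpos
  exact lt_irrefl _ hpos

theorem prod_kerovY {M : Type*} [CommMonoid M] (θ : ℝ) (lam : YoungDiagram) (f : ℝ → M) :
    ∏ j ∈ Icc 1 (kerovD lam - 1), f (kerovY θ lam j)
      = ∏ t ∈ kerovCorners lam, f (lam.rowLen (t - 1) - θ * t) := by
  rw [kerovD, Nat.add_sub_cancel]
  exact prod_Icc_getD_sort _ fun t => f (lam.rowLen (t - 1) - θ * t)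

theorem prod_kerovX {M : Type*} [CommMonoid M] (θ : ℝ) (lam : YoungDiagram) (f : ℝ → M) :
    ∏ i ∈ Icc 1 (kerovD lam), f (kerovX θ lam i)
      = f (lam.rowLen 0) * ∏ t ∈ kerovCorners lam, f (lam.rowLen t - θ * t) := by
  rw [kerovD, prod_Icc_one_eq_prod_range, prod_range_succ', mul_comm,
    ← prod_Icc_getD_sort _ fun t => f (lam.rowLen t - θ * t), prod_Icc_one_eq_prod_range]
  simp [kerovX, kerovT_eq_sort]

theorem prod_kerovCorners_mul_prod_sdiff {M : Type*} [CommMonoid M] (θ : ℝ)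
    (lam : YoungDiagram) (f : ℝ → M) :
    (∏ t ∈ kerovCorners lam, f (lam.rowLen (t - 1) - θ * t))
        * ∏ t ∈ Icc 1 (lam.colLen 0) \ kerovCorners lam, f (lam.rowLen t - θ * t)
      = ∏ i ∈ range (lam.colLen 0), f (lam.rowLen i - θ * (i + 1)) := by
  have hshift : ∏ i ∈ range (lam.colLen 0), f (lam.rowLen i - θ * (i + 1))
      = ∏ t ∈ Icc 1 (lam.colLen 0), f (lam.rowLen (t - 1) - θ * t) := by
    simp [prod_Icc_one_eq_prod_range]
  rw [hshift, ← prod_sdiff (kerovCorners_subset lam), mul_comm]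
  congr 1
  exact prod_congr rfl fun t ht => by rw [rowLen_eq_of_mem_sdiff_kerovCorners ht]

theorem H_eq_char_fun_ratio_general (θ : ℝ) (lam : YoungDiagram) (u : ℝ)
    (h1 : ∀ i ∈ Finset.Icc 1 (kerovD lam), u - kerovX θ lam i ≠ 0)
    (h2 : ∀ i < lam.colLen 0, u - θ - (lam.rowLen i : ℝ) + θ * ((i : ℝ) + 1) ≠ 0)
    (h3 : ∀ i < lam.colLen 0, u + θ * ((i : ℝ) + 1) ≠ 0) :
    (u * ∏ j ∈ Finset.Icc 1 (kerovD lam - 1), (u - kerovY θ lam j)) /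
        (∏ i ∈ Finset.Icc 1 (kerovD lam), (u - kerovX θ lam i))
      = (∏ i ∈ Finset.range (lam.colLen 0),
            (u - θ + θ * ((i : ℝ) + 1)) / (u - θ - (lam.rowLen i : ℝ) + θ * ((i : ℝ) + 1))) *
        (∏ i ∈ Finset.range (lam.colLen 0),
            (u - (lam.rowLen i : ℝ) + θ * ((i : ℝ) + 1)) / (u + θ * ((i : ℝ) + 1))) := by
  have hZ : ∏ t ∈ Icc 1 (lam.colLen 0) \ kerovCorners lam, (u - (lam.rowLen t - θ * t)) ≠ 0 :=
    prod_ne_zero_iff.2 fun t ht h => h2 t (lt_colLen_of_mem_sdiff_kerovCorners ht) (by linarith)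
  have hY := prod_kerovCorners_mul_prod_sdiff θ lam (u - ·)
  have hX := prod_sdiff (kerovCorners_subset lam) (f := fun t : ℕ => u - (lam.rowLen t - θ * t))
  rw [prod_Icc_one_eq_prod_range] at hX
  have hA := prod_range_mul_eq_mul_prod_range_succ
    (fun i : ℕ => u - (lam.rowLen i - θ * i)) (lam.colLen 0)
  rw [lam.rowLen_colLen_zero] at hA
  have hE := prod_range_mul_eq_mul_prod_range_succ (fun i : ℕ => u + θ * i) (lam.colLen 0)
  push_cast at hE
  rw [prod_div_distrib, prod_div_distrib, div_mul_div_comm, div_eq_div_iff (prod_ne_zero_iff.2 h1)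
      (mul_ne_zero (prod_ne_zero_iff.2 fun i hi => h2 i (mem_range.1 hi))
        (prod_ne_zero_iff.2 fun i hi => h3 i (mem_range.1 hi))),
    prod_kerovY θ lam (u - ·), prod_kerovX θ lam (u - ·)]
  have hx (i : ℕ) : u - θ - lam.rowLen i + θ * (i + 1) = u - (lam.rowLen i - θ * i) := by ring
  have hy (i : ℕ) : u - lam.rowLen i + θ * (i + 1) = u - (lam.rowLen i - θ * (i + 1)) := by ring
  have hshift (i : ℕ) : u - θ + θ * (i + 1) = u + θ * i := by ring
  simp only [hx, hy, hshift]
  apply mul_right_cancel₀ hZ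
  set A := ∏ i ∈ range (lam.colLen 0), (u - (lam.rowLen i - θ * i))
  set B := ∏ i ∈ range (lam.colLen 0), (u - (lam.rowLen i - θ * (i + 1)))
  set E := ∏ i ∈ range (lam.colLen 0), (u + θ * i)
  set E' := ∏ i ∈ range (lam.colLen 0), (u + θ * (i + 1))
  linear_combination u * A * E' * hY - E * B * (u - lam.rowLen 0) * hX + E * B * hA - B * A * hE

/-- `H_θ(u;λ) = Φ_θ(u-θ;λ) / Φ_θ(u;λ)` as rational functions in `u`,
i.e. the identity holds for every `u` where both sides are defined. -/
theorem H_eq_char_fun_ratio (θ : ℝ) (hθ : 0 < θ) (lam : YoungDiagram) (u : ℝ)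
    (h1 : ∀ i ∈ Finset.Icc 1 (kerovD lam), u - kerovX θ lam i ≠ 0)
    (h2 : ∀ i < lam.colLen 0, u - θ - (lam.rowLen i : ℝ) + θ * ((i : ℝ) + 1) ≠ 0)
    (h3 : ∀ i < lam.colLen 0, u + θ * ((i : ℝ) + 1) ≠ 0) :
    (u * ∏ j ∈ Finset.Icc 1 (kerovD lam - 1), (u - kerovY θ lam j)) /
        (∏ i ∈ Finset.Icc 1 (kerovD lam), (u - kerovX θ lam i))
      = (∏ i ∈ Finset.range (lam.colLen 0),
            (u - θ + θ * ((i : ℝ) + 1)) / (u - θ - (lam.rowLen i : ℝ) + θ * ((i : ℝ) + 1))) *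
        (∏ i ∈ Finset.range (lam.colLen 0),
            (u - (lam.rowLen i : ℝ) + θ * ((i : ℝ) + 1)) / (u + θ * ((i : ℝ) + 1))) :=
  H_eq_char_fun_ratio_general θ lam u h1 h2 h3
end

section
/- For every Young diagram λ and every θ > 0, the coefficients π_i^↑(λ) = Π_{j=1}^{d−1}(x_i − y_j) / Π_{l≠i}(x_i − x_l), i = 1,…,d, are strictly positive and sum to 1: π_i^↑(λ) > 0 for each i, and Σ_{i=1}^{d} π_i^↑(λ) = 1. -/
open scoped BigOperators Classical

/-!
Summing the ratios over `i` is Lagrange interpolation of the monic polynomial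
`∏ j, (u - y j)` of degree `d - 1` at the `d` distinct nodes `x i`: it returns the leading
coefficient `1`. Positivity of each ratio comes from the interlacing
`x 1 > y 1 > x 2 > ⋯ > y (d-1) > x d`.
-/

open Finset

theorem sum_prod_sub_div_prod_sub_eq_one {ι κ F : Type*} [Field F] [DecidableEq ι]
    {s : Finset ι} {v : ι → F} (hv : Set.InjOn v s) {t : Finset κ} (y : κ → F)
    (hst : #s = #t + 1) :
    ∑ i ∈ s, (∏ j ∈ t, (v i - y j)) / ∏ l ∈ s.erase i, (v i - v l) = 1 := by
  have h := Lagrange.leadingCoeff_eq_sum hv (P := Lagrange.nodal t y)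
    (by rw [Lagrange.degree_nodal, hst]; norm_cast)
  simpa [Lagrange.nodal_monic.leadingCoeff, Lagrange.eval_nodal] using h.symm

section Interlacing

variable {x y : ℕ → ℝ} {n : ℕ}

theorem strictAntiOn_Icc_of_interlacing (hxy : ∀ j ∈ Icc 1 n, x (j + 1) < y j)
    (hyx : ∀ j ∈ Icc 1 n, y j < x j) : StrictAntiOn x (Set.Icc 1 (n + 1)) := by
  refine strictAntiOn_of_add_one_lt Set.ordConnected_Icc fun j _ hj hj' => ?_
  have hj : j ∈ Icc 1 n := by simp only [Set.mem_Icc, mem_Icc] at hj hj' ⊢; omega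
  exact (hxy j hj).trans (hyx j hj)

/-- Pairing the factor `x i - y j` with `x i - x j` for `j < i` and with `x i - x (j + 1)`
for `j ≥ i` writes the ratio as a product of quotients of two numbers of equal sign. -/
theorem prod_sub_div_prod_sub_pos_of_interlacing (hxy : ∀ j ∈ Icc 1 n, x (j + 1) < y j)
    (hyx : ∀ j ∈ Icc 1 n, y j < x j) {i : ℕ} (hi : i ∈ Icc 1 (n + 1)) :
    0 < (∏ j ∈ Icc 1 n, (x i - y j)) / ∏ l ∈ (Icc 1 (n + 1)).erase i, (x i - x l) := by
  have hx := strictAntiOn_Icc_of_interlacing hxy hyx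
  rw [mem_Icc] at hi
  have hreindex : ∏ l ∈ (Icc 1 (n + 1)).erase i, (x i - x l)
      = ∏ j ∈ Icc 1 n, (x i - x (if j < i then j else j + 1)) := by
    refine prod_nbij' (fun l => if l < i then l else l - 1)
      (fun j => if j < i then j else j + 1) ?_ ?_ ?_ ?_ ?_ <;>
      intro a ha <;> simp only [mem_erase, mem_Icc] at ha ⊢ <;>
      split_ifs <;> simp_all <;> omega
  rw [hreindex, ← prod_div_distrib]
  refine prod_pos fun j hj => ?_
  have hj' := mem_Icc.mp hj
  split_ifs with hji
  · refine div_pos_of_neg_of_neg ?_ ?_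
    · have : x i ≤ x (j + 1) := hx.antitoneOn ⟨by omega, by omega⟩ hi (by omega)
      linarith [hxy j hj]
    · have : x i < x j := hx ⟨by omega, by omega⟩ hi hji
      linarith
  · refine div_pos ?_ ?_
    · have : x j ≤ x i := hx.antitoneOn hi ⟨by omega, by omega⟩ (by omega)
      linarith [hyx j hj]
    · have : x (j + 1) < x i := hx hi ⟨by omega, by omega⟩ (by omega)
      linarith

end Interlacing

section Kerov

variable (lam : YoungDiagram)

theorem kerovT_getD_mem {k : ℕ} (hk : k < (kerovT lam).length) :
    1 ≤ (kerovT lam).getD k 0 ∧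
      lam.rowLen ((kerovT lam).getD k 0) < lam.rowLen ((kerovT lam).getD k 0 - 1) := by
  have h := List.getD_eq_getElem (kerovT lam) 0 hk ▸ List.getElem_mem hk
  simp only [kerovT, mem_sort, mem_filter, mem_Icc] at h
  exact ⟨h.1.1, h.2⟩

theorem kerovT_getD_lt_getD {k k' : ℕ} (h : k < k') (hk' : k' < (kerovT lam).length) :
    (kerovT lam).getD k 0 < (kerovT lam).getD k' 0 := by
  rw [List.getD_eq_getElem _ _ (h.trans hk'), List.getD_eq_getElem _ _ hk']
  exact List.pairwise_iff_getElem.mp (sortedLT_sort _).pairwise _ _ _ _ h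

theorem kerovX_succ_lt_kerovY (θ : ℝ) :
    ∀ j ∈ Icc 1 (kerovT lam).length, kerovX θ lam (j + 1) < kerovY θ lam j := by
  intro j hj
  rw [mem_Icc] at hj
  have hdrop := (kerovT_getD_mem lam (k := j - 1) (by omega)).2
  have hidx : j + 1 - 2 = j - 1 := by omega
  rw [kerovX, if_neg (by omega), kerovY, hidx]
  push_cast [sub_lt_sub_iff_right]
  exact_mod_cast hdrop

theorem kerovY_lt_kerovX {θ : ℝ} (hθ : 0 < θ) :
    ∀ j ∈ Icc 1 (kerovT lam).length, kerovY θ lam j < kerovX θ lam j := by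
  intro j hj
  rw [mem_Icc] at hj
  set t := (kerovT lam).getD (j - 1) 0
  have ht : 1 ≤ t := (kerovT_getD_mem lam (k := j - 1) (by omega)).1
  rw [kerovY, kerovX]
  split_ifs with hj1
  · have hrow : (lam.rowLen (t - 1) : ℝ) ≤ lam.rowLen 0 := by
      exact_mod_cast lam.rowLen_anti _ _ (Nat.zero_le _)
    have : 0 < θ * (t : ℝ) := mul_pos hθ (by exact_mod_cast ht)
    linarith
  · set t' := (kerovT lam).getD (j - 2) 0
    have htt' : t' < t := kerovT_getD_lt_getD lam (by omega) (by omega)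
    have hrow : (lam.rowLen (t - 1) : ℝ) ≤ lam.rowLen t' := by
      exact_mod_cast lam.rowLen_anti _ _ (by omega)
    have : θ * (t' : ℝ) < θ * t := mul_lt_mul_of_pos_left (by exact_mod_cast htt') hθ
    linarith

end Kerov

/-- The coefficients `π_i^↑(λ)`, `1 ≤ i ≤ d`, are strictly positive and sum to `1`. -/
theorem kerovPi_pos_sum_one (θ : ℝ) (hθ : 0 < θ) (lam : YoungDiagram) :
    (∀ i ∈ Finset.Icc 1 (kerovD lam), 0 < kerovPi θ lam i) ∧
    ∑ i ∈ Finset.Icc 1 (kerovD lam), kerovPi θ lam i = 1 := by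
  have hxy := kerovX_succ_lt_kerovY lam θ
  have hyx := kerovY_lt_kerovX lam hθ
  simp only [kerovPi, kerovD, Nat.add_sub_cancel]
  refine ⟨fun i hi => prod_sub_div_prod_sub_pos_of_interlacing hxy hyx hi, ?_⟩
  have hinj := (strictAntiOn_Icc_of_interlacing hxy hyx).injOn
  rw [← coe_Icc] at hinj
  exact sum_prod_sub_div_prod_sub_eq_one hinj _ (by simp)
end
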